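/- arXiv:2309.12122 — 8 statements merged into one kernel-verified Lean document; each statement's English description precedes it below -/
import Mathlib

section
/- Let g be a continuous strictly positive density on [0,1] with CDF G, and let γ : [0,1] → ℝ be continuous and strictly increasing with γ(0) = 0 and γ(1) > 1; let c̄ ∈ (0,1) satisfy γ(c̄) = 1 and let γ⁻¹ : [0,1] → [0,c̄] be the inverse of γ restricted to [0,c̄]. Define the pseudo value y(v) = (∫_v^1 γ⁻¹(x) g(x) dx)/(1 − G(v)) for v ∈ [0,1). Then: (i) y is continuous and strictly increasing on [0,1); (ii) y(0) = ∫_0^1 γ⁻¹(x) g(x) dx > 0; (iii) lim_{v→1⁻} y(v) = γ⁻¹(1) = c̄ < 1. Consequently there exists ε > 0 such that y(v) > v for all v ∈ [0, ε) and y(v) < v for all v ∈ (1 − ε, 1). -/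
open MeasureTheory Set

/-- **Properties of the pseudo value** `y(v) = E[γ⁻¹(ṽ) | ṽ ≥ v]`: it is continuous and
strictly increasing on `[0,1)`, starts at `∫ γ⁻¹ dG > 0`, tends to `γ⁻¹(1) = c̄ < 1`
as `v → 1⁻`; consequently `y(v) > v` near `0` and `y(v) < v` near `1`. -/
theorem stmt_3
    (g γ γinv : ℝ → ℝ) (cbar : ℝ)
    (hg_cont : ContinuousOn g (Icc 0 1))
    (hg_pos : ∀ x ∈ Icc (0:ℝ) 1, 0 < g x)
    (hg_mass : ∫ x in (0:ℝ)..1, g x = 1)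
    (hγ_cont : ContinuousOn γ (Icc 0 1))
    (hγ_mono : StrictMonoOn γ (Icc 0 1))
    (hγ0 : γ 0 = 0) (hγ1 : 1 < γ 1)
    (hcbar : cbar ∈ Ioo (0:ℝ) 1) (hγcbar : γ cbar = 1)
    (hinv_mem : ∀ x ∈ Icc (0:ℝ) 1, γinv x ∈ Icc 0 cbar)
    (hinv : ∀ x ∈ Icc (0:ℝ) 1, γ (γinv x) = x)
    (y : ℝ → ℝ)
    (hy : ∀ v ∈ Ico (0:ℝ) 1,
      y v = (∫ x in v..1, γinv x * g x) / (1 - ∫ x in (0:ℝ)..v, g x)) :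
    ContinuousOn y (Ico 0 1) ∧
    StrictMonoOn y (Ico 0 1) ∧
    y 0 = ∫ x in (0:ℝ)..1, γinv x * g x ∧
    0 < y 0 ∧
    Filter.Tendsto y (nhdsWithin 1 (Iio 1)) (nhds cbar) ∧
    γinv 1 = cbar ∧ cbar < 1 ∧
    ∃ ε > 0, (∀ v ∈ Ico (0:ℝ) ε, v < y v) ∧ (∀ v ∈ Ioo (1 - ε) 1, y v < v) := by
  obtain ⟨hc0, hc1⟩ := hcbar
  have hsub : Icc (0:ℝ) cbar ⊆ Icc 0 1 := Icc_subset_Icc le_rfl hc1.le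
  have hinv01 : ∀ x ∈ Icc (0:ℝ) 1, γinv x ∈ Icc (0:ℝ) 1 :=
    fun x hx => hsub (hinv_mem x hx)
  have hinj : InjOn γ (Icc (0:ℝ) 1) := hγ_mono.injOn
  have hcbar_mem : cbar ∈ Icc (0:ℝ) 1 := ⟨hc0.le, hc1.le⟩
  have hinv1 : γinv 1 = cbar := by
    apply hinj (hinv01 1 (by norm_num)) hcbar_mem
    rw [hinv 1 (by norm_num), hγcbar]
  have hinv_mono : StrictMonoOn γinv (Icc (0:ℝ) 1) := by
    intro a ha b hb hab
    by_contra h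
    push_neg at h
    have := hγ_mono.monotoneOn (hinv01 b hb) (hinv01 a ha) h
    rw [hinv a ha, hinv b hb] at this
    exact absurd this (not_le.2 hab)
  have hγt : ∀ t ∈ Icc (0:ℝ) cbar, γ t ∈ Icc (0:ℝ) 1 ∧ γinv (γ t) = t := by
    intro t ht
    have ht1 : t ∈ Icc (0:ℝ) 1 := hsub ht
    have h1 : γ t ∈ Icc (0:ℝ) 1 := by
      constructor
      · rw [← hγ0]; exact hγ_mono.monotoneOn (by norm_num) ht1 ht.1
      · rw [← hγcbar]; exact hγ_mono.monotoneOn ht1 hcbar_mem ht.2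
    refine ⟨h1, hinj (hinv01 _ h1) ht1 ?_⟩
    rw [hinv _ h1]
  have hinv_pos : ∀ x ∈ Ioc (0:ℝ) 1, 0 < γinv x := by
    intro x hx
    rcases (hinv_mem x ⟨hx.1.le, hx.2⟩).1.lt_or_eq with h | h
    · exact h
    · exfalso
      have := hinv x ⟨hx.1.le, hx.2⟩
      rw [← h, hγ0] at this
      exact absurd this.symm (ne_of_gt hx.1)
  have hinv_lt : ∀ x ∈ Ico (0:ℝ) 1, γinv x < cbar := by
    intro x hx
    rw [← hinv1]
    exact hinv_mono ⟨hx.1, hx.2.le⟩ (by norm_num) hx.2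
  -- continuity of γinv on [0,1]
  have hinv_cont : ContinuousOn γinv (Icc (0:ℝ) 1) := by
    intro a ha
    have hL : ContinuousWithinAt γinv (Icc 0 a) a := by
      rcases eq_or_lt_of_le ha.1 with h0 | h0
      · rw [← h0, Icc_self]
        exact continuousWithinAt_singleton
      · apply (hinv_mono.continuousWithinAt_left_of_exists_between (s := Icc 0 1)
          ?_ ?_).mono (fun x hx => hx.2)
        · rw [mem_nhdsWithin]
          exact ⟨Ioi 0, isOpen_Ioi, h0, fun x hx => ⟨le_of_lt hx.1, le_trans hx.2 ha.2⟩⟩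
        · intro b hb
          have hapos : 0 < γinv a := hinv_pos a ⟨h0, ha.2⟩
          have htlt : max b 0 < γinv a := max_lt hb hapos
          have htmem : max b 0 ∈ Icc (0:ℝ) cbar :=
            ⟨le_max_right _ _, le_trans htlt.le (hinv_mem a ha).2⟩
          obtain ⟨hγt1, hγt2⟩ := hγt _ htmem
          exact ⟨γ (max b 0), hγt1, by rw [hγt2]; exact ⟨le_max_left _ _, htlt⟩⟩
    have hR : ContinuousWithinAt γinv (Icc a 1) a := by
      rcases eq_or_lt_of_le ha.2 with h1 | h1
      · rw [h1, Icc_self]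
        exact continuousWithinAt_singleton
      · apply (hinv_mono.continuousWithinAt_right_of_exists_between (s := Icc 0 1)
          ?_ ?_).mono (fun x hx => hx.1)
        · rw [mem_nhdsWithin]
          exact ⟨Iio 1, isOpen_Iio, h1, fun x hx => ⟨le_trans ha.1 hx.2, le_of_lt hx.1⟩⟩
        · intro b hb
          have halt : γinv a < cbar := hinv_lt a ⟨ha.1, h1⟩
          have htgt : γinv a < min b cbar := lt_min hb halt
          have htmem : min b cbar ∈ Icc (0:ℝ) cbar :=
            ⟨le_trans (hinv_mem a ha).1 htgt.le, min_le_right _ _⟩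
          obtain ⟨hγt1, hγt2⟩ := hγt _ htmem
          exact ⟨γ (min b cbar), hγt1, by rw [hγt2]; exact ⟨htgt, min_le_left _ _⟩⟩
    have := hL.union hR
    exact this.mono (by rw [Icc_union_Icc_eq_Icc ha.1 ha.2])
  -- integrability
  have hf_cont : ContinuousOn (fun x => γinv x * g x) (Icc (0:ℝ) 1) :=
    hinv_cont.mul hg_cont
  have hfi : ∀ a b, a ∈ Icc (0:ℝ) 1 → b ∈ Icc (0:ℝ) 1 →
      IntervalIntegrable (fun x => γinv x * g x) volume a b :=
    fun a b ha hb => (hf_cont.mono (uIcc_subset_Icc ha hb)).intervalIntegrable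
  have hgi : ∀ a b, a ∈ Icc (0:ℝ) 1 → b ∈ Icc (0:ℝ) 1 →
      IntervalIntegrable g volume a b :=
    fun a b ha hb => (hg_cont.mono (uIcc_subset_Icc ha hb)).intervalIntegrable
  -- the denominator
  have hD : ∀ v ∈ Icc (0:ℝ) 1, 1 - (∫ x in (0:ℝ)..v, g x) = ∫ x in v..1, g x := by
    intro v hv
    have := intervalIntegral.integral_add_adjacent_intervals
      (hgi 0 v (by norm_num) hv) (hgi v 1 hv (by norm_num))
    rw [hg_mass] at this
    linarith
  have hDpos : ∀ v ∈ Ico (0:ℝ) 1, 0 < ∫ x in v..1, g x := by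
    intro v hv
    exact intervalIntegral.intervalIntegral_pos_of_pos_on
      (hgi v 1 ⟨hv.1, hv.2.le⟩ (by norm_num))
      (fun x hx => hg_pos x ⟨le_trans hv.1 hx.1.le, hx.2.le⟩) hv.2
  have hy2 : ∀ v ∈ Ico (0:ℝ) 1,
      y v = (∫ x in v..1, γinv x * g x) / (∫ x in v..1, g x) := by
    intro v hv
    rw [hy v hv, hD v ⟨hv.1, hv.2.le⟩]
  -- bounds
  have hlow : ∀ v ∈ Ico (0:ℝ) 1,
      γinv v * (∫ x in v..1, g x) ≤ ∫ x in v..1, γinv x * g x := by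
    intro v hv
    have hv1 : v ∈ Icc (0:ℝ) 1 := ⟨hv.1, hv.2.le⟩
    rw [← intervalIntegral.integral_const_mul]
    apply intervalIntegral.integral_mono_on hv.2.le
      ((hgi v 1 hv1 (by norm_num)).const_mul _) (hfi v 1 hv1 (by norm_num))
    intro x hx
    have hx1 : x ∈ Icc (0:ℝ) 1 := ⟨le_trans hv.1 hx.1, hx.2⟩
    exact mul_le_mul_of_nonneg_right
      (hinv_mono.monotoneOn hv1 hx1 hx.1) (hg_pos x hx1).le
  have hupp : ∀ v ∈ Ico (0:ℝ) 1,
      (∫ x in v..1, γinv x * g x) ≤ cbar * ∫ x in v..1, g x := by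
    intro v hv
    have hv1 : v ∈ Icc (0:ℝ) 1 := ⟨hv.1, hv.2.le⟩
    rw [← intervalIntegral.integral_const_mul]
    apply intervalIntegral.integral_mono_on hv.2.le
      (hfi v 1 hv1 (by norm_num)) ((hgi v 1 hv1 (by norm_num)).const_mul _)
    intro x hx
    have hx1 : x ∈ Icc (0:ℝ) 1 := ⟨le_trans hv.1 hx.1, hx.2⟩
    exact mul_le_mul_of_nonneg_right (hinv_mem x hx1).2 (hg_pos x hx1).le
  have hylow : ∀ v ∈ Ico (0:ℝ) 1, γinv v ≤ y v := by
    intro v hv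
    rw [hy2 v hv, le_div_iff₀ (hDpos v hv)]
    exact hlow v hv
  have hyupp : ∀ v ∈ Ico (0:ℝ) 1, y v ≤ cbar := by
    intro v hv
    rw [hy2 v hv, div_le_iff₀ (hDpos v hv)]
    exact hupp v hv
  -- continuity of y
  have huIcc : uIcc (0:ℝ) 1 = Icc 0 1 := uIcc_of_le zero_le_one
  have hN : ContinuousOn (fun v => ∫ x in v..1, γinv x * g x) (Icc (0:ℝ) 1) := by
    have := intervalIntegral.continuousOn_primitive_interval_left
      (f := fun x => γinv x * g x) (μ := volume) (a := (0:ℝ)) (b := 1)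
      (by rw [huIcc]; exact hf_cont.integrableOn_Icc)
    rwa [huIcc] at this
  have hDc : ContinuousOn (fun v => ∫ x in v..1, g x) (Icc (0:ℝ) 1) := by
    have := intervalIntegral.continuousOn_primitive_interval_left
      (f := g) (μ := volume) (a := (0:ℝ)) (b := 1)
      (by rw [huIcc]; exact hg_cont.integrableOn_Icc)
    rwa [huIcc] at this
  have hy_cont : ContinuousOn y (Ico (0:ℝ) 1) := by
    have hc : ContinuousOn
        (fun v => (∫ x in v..1, γinv x * g x) / (∫ x in v..1, g x)) (Ico (0:ℝ) 1) :=
      (hN.mono Ico_subset_Icc_self).div (hDc.mono Ico_subset_Icc_self)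
        (fun v hv => (hDpos v hv).ne')
    exact hc.congr hy2
  -- strict monotonicity
  have hy_mono : StrictMonoOn y (Ico (0:ℝ) 1) := by
    intro v hv w hw hvw
    have hv1 : v ∈ Icc (0:ℝ) 1 := ⟨hv.1, hv.2.le⟩
    have hw1 : w ∈ Icc (0:ℝ) 1 := ⟨hw.1, hw.2.le⟩
    set A := ∫ x in v..w, γinv x * g x with hA_def
    set B := ∫ x in v..w, g x with hB_def
    set Nw := ∫ x in w..1, γinv x * g x with hNw_def
    set Dw := ∫ x in w..1, g x with hDw_def
    have hBpos : 0 < B := intervalIntegral.intervalIntegral_pos_of_pos_on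
      (hgi v w hv1 hw1)
      (fun x hx => hg_pos x ⟨le_trans hv.1 hx.1.le, le_trans hx.2.le hw.2.le⟩) hvw
    have hDwpos : 0 < Dw := hDpos w hw
    have hsplitN : (∫ x in v..1, γinv x * g x) = A + Nw :=
      (intervalIntegral.integral_add_adjacent_intervals
        (hfi v w hv1 hw1) (hfi w 1 hw1 (by norm_num))).symm
    have hsplitD : (∫ x in v..1, g x) = B + Dw :=
      (intervalIntegral.integral_add_adjacent_intervals
        (hgi v w hv1 hw1) (hgi w 1 hw1 (by norm_num))).symm
    have hIccvw : Icc v w ⊆ Icc (0:ℝ) 1 := Icc_subset_Icc hv.1 hw.2.le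
    have hAlt : A < γinv w * B := by
      rw [hB_def, ← intervalIntegral.integral_const_mul]
      apply intervalIntegral.integral_lt_integral_of_continuousOn_of_le_of_exists_lt hvw
        (hf_cont.mono hIccvw) (continuousOn_const.mul (hg_cont.mono hIccvw))
      · intro x hx
        have hx1 : x ∈ Icc (0:ℝ) 1 := hIccvw ⟨hx.1.le, hx.2⟩
        exact mul_le_mul_of_nonneg_right
          (hinv_mono.monotoneOn hx1 hw1 hx.2) (hg_pos x hx1).le
      · refine ⟨v, ⟨le_rfl, hvw.le⟩, ?_⟩
        exact mul_lt_mul_of_pos_right (hinv_mono hv1 hw1 hvw) (hg_pos v hv1)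
    have hNwge : γinv w * Dw ≤ Nw := hlow w hw
    rw [hy2 v hv, hy2 w hw, hsplitN, hsplitD]
    rw [div_lt_div_iff₀ (by linarith) hDwpos]
    nlinarith [mul_lt_mul_of_pos_right hAlt hDwpos,
      mul_le_mul_of_nonneg_left hNwge hBpos.le]
  -- value at 0
  have hy0 : y 0 = ∫ x in (0:ℝ)..1, γinv x * g x := by
    rw [hy 0 ⟨le_rfl, one_pos⟩]
    simp
  have hy0pos : 0 < y 0 := by
    rw [hy0]
    exact intervalIntegral.intervalIntegral_pos_of_pos_on
      (hfi 0 1 (by norm_num) (by norm_num))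
      (fun x hx => mul_pos (hinv_pos x ⟨hx.1, hx.2.le⟩)
        (hg_pos x ⟨hx.1.le, hx.2.le⟩)) one_pos
  -- limit at 1
  have hIooMem : Ioo (0:ℝ) 1 ∈ nhdsWithin (1:ℝ) (Iio 1) := by
    rw [← Ioi_inter_Iio]
    exact Filter.inter_mem
      (mem_nhdsWithin_of_mem_nhds (Ioi_mem_nhds one_pos)) self_mem_nhdsWithin
  have hγinv_tendsto : Filter.Tendsto γinv (nhdsWithin 1 (Iio 1)) (nhds cbar) := by
    have h1 : ContinuousWithinAt γinv (Icc 0 1) 1 := hinv_cont 1 (by norm_num)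
    rw [ContinuousWithinAt, hinv1] at h1
    exact h1.mono_left
      (le_trans (nhdsWithin_le_of_mem hIooMem) (nhdsWithin_mono 1 Ioo_subset_Icc_self))
  have hy_tendsto : Filter.Tendsto y (nhdsWithin 1 (Iio 1)) (nhds cbar) := by
    apply tendsto_of_tendsto_of_tendsto_of_le_of_le' hγinv_tendsto tendsto_const_nhds
    · filter_upwards [hIooMem] with v hv using hylow v ⟨hv.1.le, hv.2⟩
    · filter_upwards [hIooMem] with v hv using hyupp v ⟨hv.1.le, hv.2⟩
  -- ε part
  have hy0le : y 0 ≤ cbar := hyupp 0 ⟨le_rfl, one_pos⟩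
  refine ⟨hy_cont, hy_mono, hy0, hy0pos, hy_tendsto, hinv1, hc1,
    min (y 0) (1 - cbar), lt_min hy0pos (by linarith), ?_, ?_⟩
  · intro v hv
    have hvlt : v < y 0 := lt_of_lt_of_le hv.2 (min_le_left _ _)
    have hv1 : v ∈ Ico (0:ℝ) 1 := ⟨hv.1, by linarith⟩
    rcases eq_or_lt_of_le hv.1 with h0 | h0
    · rw [← h0]; exact hy0pos
    · exact lt_of_lt_of_le hvlt
        (hy_mono.monotoneOn ⟨le_rfl, one_pos⟩ hv1 hv.1)
  · intro v hv
    have h1 : cbar ≤ 1 - min (y 0) (1 - cbar) := by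
      have := min_le_right (y 0) (1 - cbar); linarith
    have hvgt : cbar < v := lt_of_le_of_lt h1 hv.1
    have hv1 : v ∈ Ico (0:ℝ) 1 := ⟨le_trans hc0.le hvgt.le, hv.2⟩
    exact lt_of_le_of_lt (hyupp v hv1) hvgt
end

section
/- Let g be a continuous strictly positive density on [0,1] with CDF G, and let γ : [0,1] → ℝ be continuously differentiable and strictly increasing with γ(0) = 0 and γ(1) > 1; let c̄ satisfy γ(c̄) = 1 and let γ⁻¹ : [0,1] → [0,c̄] be the inverse of γ restricted to [0,c̄]. Then for every c ∈ [0, c̄): c + (∫_c^{c̄} (1 − G(γ(x))) dx)/(1 − G(γ(c))) = (∫_{γ(c)}^1 γ⁻¹(v) g(v) dv)/(1 − G(γ(c))). That is, the Baron–Myerson transfer-based price c + (∫_c^1 q*(x) dx)/q*(c) with q*(x) = 1 − G(min{γ(x),1}) equals the conditional expectation E_{ṽ∼G}[γ⁻¹(ṽ) | ṽ ≥ γ(c)]. -/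
open MeasureTheory Set

/-! With `q x = 1 - G (γ x)`, integration by parts gives
`c q(c) + ∫_c^c̄ q = ∫_c^c̄ x g(γ x) γ'(x) dx`, the boundary term at `c̄` vanishing because
`G (γ c̄) = G 1 = 1`. The substitution `v = γ x`, under which `x = γ⁻¹ v`, turns the right side
into `∫_{γ c}^1 γ⁻¹(v) g(v) dv`, and `q(c) > 0` since `g > 0`. -/

theorem hasDerivAt_integral_of_continuousOn_Icc {g : ℝ → ℝ} {a b y : ℝ}
    (hg : ContinuousOn g (Icc a b)) (hy : y ∈ Ioo a b) :
    HasDerivAt (fun t => ∫ s in a..t, g s) (g y) y :=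
  intervalIntegral.integral_hasDerivAt_right
    ((hg.mono (Icc_subset_Icc_right hy.2.le)).intervalIntegrable_of_Icc hy.1.le)
    ((hg.mono Ioo_subset_Icc_self).stronglyMeasurableAtFilter isOpen_Ioo y hy)
    (hg.continuousAt (Icc_mem_nhds hy.1 hy.2))

theorem continuousOn_integral_of_continuousOn_Icc {g : ℝ → ℝ} {a b : ℝ} (hab : a ≤ b)
    (hg : ContinuousOn g (Icc a b)) :
    ContinuousOn (fun t => ∫ s in a..t, g s) (Icc a b) := by
  have := intervalIntegral.continuousOn_primitive_interval (μ := volume)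
    (hg.integrableOn_Icc.mono_set (uIcc_of_le hab).subset)
  rwa [uIcc_of_le hab] at this

/- The measure-theoretic change of variables needs no regularity of `ψ` or `f`: in particular the
inverse of `φ` need not be shown continuous. -/
theorem integral_leftInvOn_mul_eq_integral_mul_deriv {φ φ' ψ f : ℝ → ℝ} {a b : ℝ}
    (hab : a ≤ b) (hmono : MonotoneOn φ (Icc a b))
    (hφ : ∀ x ∈ Icc a b, HasDerivWithinAt φ (φ' x) (Icc a b) x)
    (hψ : LeftInvOn ψ φ (Icc a b)) :
    ∫ v in φ a..φ b, ψ v * f v = ∫ x in a..b, x * (f (φ x) * φ' x) := by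
  have himage : φ '' Icc a b = Icc (φ a) (φ b) :=
    ContinuousOn.image_Icc_of_monotoneOn hab (fun x hx => (hφ x hx).continuousWithinAt) hmono
  rw [intervalIntegral.integral_of_le (hmono (left_mem_Icc.2 hab) (right_mem_Icc.2 hab) hab),
    intervalIntegral.integral_of_le hab, ← integral_Icc_eq_integral_Ioc,
    ← integral_Icc_eq_integral_Ioc, ← himage,
    integral_image_eq_integral_deriv_smul_of_monotoneOn measurableSet_Icc hφ hmono]
  refine setIntegral_congr_fun measurableSet_Icc fun x hx => ?_
  rw [smul_eq_mul, hψ hx]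
  ring

theorem integral_mul_deriv_eq_mul_one_sub_add_integral {F F' : ℝ → ℝ} {a b : ℝ}
    (hab : a ≤ b) (hF : ContinuousOn F (Icc a b)) (hF' : ∀ x ∈ Ioo a b, HasDerivAt F (F' x) x)
    (hF'_int : IntervalIntegrable F' volume a b) (hFb : F b = 1) :
    ∫ x in a..b, x * F' x = a * (1 - F a) + ∫ x in a..b, (1 - F x) := by
  have hF_int : IntervalIntegrable F volume a b := hF.intervalIntegrable_of_Icc hab
  rw [intervalIntegral.integral_mul_deriv_eq_deriv_mul_of_hasDerivAt (u := fun x => x)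
      continuousOn_id (by rwa [uIcc_of_le hab]) (fun x _ => hasDerivAt_id' x)
      (fun x hx => hF' x (by rwa [min_eq_left hab, max_eq_right hab] at hx))
      intervalIntegrable_const hF'_int,
    intervalIntegral.integral_sub intervalIntegrable_const hF_int]
  simp only [one_mul, hFb, intervalIntegral.integral_const, smul_eq_mul, mul_one]
  ring

theorem integral_lt_integral_of_pos_on {g : ℝ → ℝ} {a b y : ℝ}
    (hg : ContinuousOn g (Icc a b)) (hpos : ∀ x ∈ Ioo a b, 0 < g x) (hy : y ∈ Ico a b) :
    ∫ s in a..y, g s < ∫ s in a..b, g s := by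
  have hab : a ≤ b := hy.1.trans hy.2.le
  rw [← sub_pos, intervalIntegral.integral_interval_sub_left (hg.intervalIntegrable_of_Icc hab)
    ((hg.mono (Icc_subset_Icc_right hy.2.le)).intervalIntegrable_of_Icc hy.1)]
  exact intervalIntegral.intervalIntegral_pos_of_pos_on
    ((hg.mono (Icc_subset_Icc_left hy.1)).intervalIntegrable_of_Icc hy.2.le)
    (fun x hx => hpos x ⟨hy.1.trans_lt hx.1, hx.2⟩) hy.2

theorem mul_one_sub_add_integral_eq_integral_mul_density
    {g γ γinv G : ℝ → ℝ} {cbar c : ℝ}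
    (hg_cont : ContinuousOn g (Icc 0 1)) (hg_mass : ∫ x in (0:ℝ)..1, g x = 1)
    (hG : ∀ x, G x = ∫ s in (0:ℝ)..x, g s)
    (hγ_diff : ContDiffOn ℝ 1 γ (Icc 0 1)) (hγ_mono : StrictMonoOn γ (Icc 0 1))
    (hγ0 : γ 0 = 0) (hcbar : cbar ≤ 1) (hγcbar : γ cbar = 1)
    (hleftInv : LeftInvOn γinv γ (Icc c cbar)) (hc : c ∈ Ico 0 cbar) :
    c * (1 - G (γ c)) + ∫ x in c..cbar, (1 - G (γ x)) = ∫ v in (γ c)..1, γinv v * g v := by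
  obtain ⟨hc0, hccbar⟩ := hc
  have hsub : Icc c cbar ⊆ Icc 0 1 := Icc_subset_Icc hc0 hcbar
  have hγ_maps : MapsTo γ (Icc c cbar) (Icc 0 1) := by
    have := (hγ_mono.monotoneOn.mono (Icc_subset_Icc_right hcbar)).mapsTo_Icc
    rw [hγ0, hγcbar] at this
    exact this.mono_left (Icc_subset_Icc_left hc0)
  have hγ_Ioo : MapsTo γ (Ioo c cbar) (Ioo 0 1) := fun x hx => by
    have := (hγ_mono.mono hsub).mapsTo_Ioo hx
    rw [hγcbar] at this
    exact ⟨(hγ_maps (left_mem_Icc.2 hccbar.le)).1.trans_lt this.1, this.2⟩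
  have hγ_deriv :
      ∀ x ∈ Icc (0:ℝ) 1, HasDerivWithinAt γ (derivWithin γ (Icc 0 1) x) (Icc 0 1) x :=
    fun x hx => (hγ_diff.differentiableOn one_ne_zero x hx).hasDerivWithinAt
  have hγ_deriv_cont : ContinuousOn (derivWithin γ (Icc 0 1)) (Icc 0 1) :=
    hγ_diff.continuousOn_derivWithin (uniqueDiffOn_Icc zero_lt_one) le_rfl
  have hγ_cont : ContinuousOn γ (Icc c cbar) := hγ_diff.continuousOn.mono hsub
  have hG_eq : G = fun t => ∫ s in (0:ℝ)..t, g s := funext hG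
  have hG_cont : ContinuousOn G (Icc 0 1) :=
    hG_eq ▸ continuousOn_integral_of_continuousOn_Icc zero_le_one hg_cont
  have hG_deriv : ∀ y ∈ Ioo (0:ℝ) 1, HasDerivAt G (g y) y := fun y hy =>
    hG_eq ▸ hasDerivAt_integral_of_continuousOn_Icc hg_cont hy
  have hsurvival := integral_mul_deriv_eq_mul_one_sub_add_integral (F := fun x => G (γ x))
    hccbar.le (hG_cont.comp hγ_cont hγ_maps)
    (fun x hx => (hG_deriv _ (hγ_Ioo hx)).comp x
      ((hγ_deriv x (hsub (Ioo_subset_Icc_self hx))).hasDerivAt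
        (Icc_mem_nhds (hc0.trans_lt hx.1) (hx.2.trans_le hcbar))))
    (((hg_cont.comp hγ_cont hγ_maps).mul (hγ_deriv_cont.mono hsub)).intervalIntegrable_of_Icc
      hccbar.le)
    (by rw [hγcbar, hG, hg_mass])
  have hsubst := integral_leftInvOn_mul_eq_integral_mul_deriv (f := g) hccbar.le
    (hγ_mono.monotoneOn.mono hsub) (fun x hx => (hγ_deriv x (hsub hx)).mono hsub) hleftInv
  rw [hγcbar] at hsubst
  rw [hsubst, hsurvival]

theorem stmt_4_general
    (g γ γinv : ℝ → ℝ) (cbar : ℝ)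
    (hg_cont : ContinuousOn g (Icc 0 1))
    (hg_pos : ∀ x ∈ Icc (0:ℝ) 1, 0 < g x)
    (hg_mass : ∫ x in (0:ℝ)..1, g x = 1)
    (hγ_diff : ContDiffOn ℝ 1 γ (Icc 0 1))
    (hγ_mono : StrictMonoOn γ (Icc 0 1))
    (hγ0 : γ 0 = 0)
    (hcbar : cbar ∈ Icc (0:ℝ) 1) (hγcbar : γ cbar = 1)
    (hinv_mem : ∀ x ∈ Icc (0:ℝ) 1, γinv x ∈ Icc 0 cbar)
    (hinv : ∀ x ∈ Icc (0:ℝ) 1, γ (γinv x) = x)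
    (G : ℝ → ℝ) (hG : ∀ x, G x = ∫ s in (0:ℝ)..x, g s) :
    ∀ c ∈ Ico (0:ℝ) cbar,
      c + (∫ x in c..cbar, (1 - G (γ x))) / (1 - G (γ c))
        = (∫ v in (γ c)..1, γinv v * g v) / (1 - G (γ c)) := by
  intro c hc
  have hsub : Icc c cbar ⊆ Icc 0 1 := Icc_subset_Icc hc.1 hcbar.2
  have hγ_maps : MapsTo γ (Icc 0 cbar) (Icc 0 1) := by
    have := (hγ_mono.monotoneOn.mono (Icc_subset_Icc_right hcbar.2)).mapsTo_Icc
    rwa [hγ0, hγcbar] at this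
  have hleftInv : LeftInvOn γinv γ (Icc c cbar) := fun x hx =>
    have hγx := hγ_maps (Icc_subset_Icc_left hc.1 hx)
    hγ_mono.injOn (Icc_subset_Icc_right hcbar.2 (hinv_mem _ hγx)) (hsub hx) (hinv _ hγx)
  have hγc : γ c ∈ Ico 0 1 := ⟨(hγ_maps ⟨hc.1, hc.2.le⟩).1,
    hγcbar ▸ hγ_mono (hsub (left_mem_Icc.2 hc.2.le)) (hsub (right_mem_Icc.2 hc.2.le)) hc.2⟩
  have hden : 0 < 1 - G (γ c) :=
    hG _ ▸ sub_pos.2 (hg_mass ▸ integral_lt_integral_of_pos_on hg_cont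
      (fun x hx => hg_pos x (Ioo_subset_Icc_self hx)) hγc)
  rw [← mul_one_sub_add_integral_eq_integral_mul_density hg_cont hg_mass hG hγ_diff hγ_mono hγ0
    hcbar.2 hγcbar hleftInv hc, add_div, mul_div_cancel_right₀ _ hden.ne']

/-- **Price identity in Proposition 1.** The Baron–Myerson transfer-based price
`c + (∫_c^c̄ (1 − G(γ x)) dx)/(1 − G(γ c))` equals the conditional expectation
`E[γ⁻¹(ṽ) | ṽ ≥ γ(c)]` for every active type `c < c̄`. -/
theorem stmt_4
    (g γ γinv : ℝ → ℝ) (cbar : ℝ)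
    (hg_cont : ContinuousOn g (Icc 0 1))
    (hg_pos : ∀ x ∈ Icc (0:ℝ) 1, 0 < g x)
    (hg_mass : ∫ x in (0:ℝ)..1, g x = 1)
    (hγ_diff : ContDiffOn ℝ 1 γ (Icc 0 1))
    (hγ_mono : StrictMonoOn γ (Icc 0 1))
    (hγ0 : γ 0 = 0) (hγ1 : 1 < γ 1)
    (hcbar : cbar ∈ Icc (0:ℝ) 1) (hγcbar : γ cbar = 1)
    (hinv_mem : ∀ x ∈ Icc (0:ℝ) 1, γinv x ∈ Icc 0 cbar)
    (hinv : ∀ x ∈ Icc (0:ℝ) 1, γ (γinv x) = x)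
    (G : ℝ → ℝ) (hG : ∀ x, G x = ∫ s in (0:ℝ)..x, g s) :
    ∀ c ∈ Ico (0:ℝ) cbar,
      c + (∫ x in c..cbar, (1 - G (γ x))) / (1 - G (γ c))
        = (∫ v in (γ c)..1, γinv v * g v) / (1 - G (γ c)) :=
  stmt_4_general g γ γinv cbar hg_cont hg_pos hg_mass hγ_diff hγ_mono hγ0 hcbar hγcbar hinv_mem hinv
    G hG
end

section
/- (Buyer-Optimal Mechanism / Proposition 1 core.) Let f and g be continuous strictly positive densities on [0,1] with CDFs F and G, and suppose the virtual cost γ(c) = c + F(c)/f(c) is continuous and strictly increasing; let c̄ be the unique solution of γ(c̄) = 1. Define V(q) = ∫_{G⁻¹(1−q)}^1 v g(v) dv, q*(c) = 1 − G(min{γ(c), 1}), and t*(c) = c·q*(c) + ∫_c^1 q*(x) dx. Then the pair (q*, t*) satisfies, for all c, c′ ∈ [0,1], t*(c) − c·q*(c) ≥ t*(c′) − c·q*(c′) and t*(c) − c·q*(c) ≥ 0; and for every pair of measurable functions q : [0,1] → [0,1] and t : [0,1] → ℝ satisfying t(c) − c·q(c) ≥ t(c′) − c·q(c′) for all c, c′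 and t(c) − c·q(c) ≥ 0 for all c, it holds that ∫_0^1 (V(q(c)) − t(c)) f(c) dc ≤ ∫_0^1 (V(q*(c)) − t*(c)) f(c) dc. -/
/-!
Incentive compatibility gives `(y - x) q(y) ≤ U(x) - U(y)` for the seller's rent
`U(c) = t(c) - c q(c)`, so `q` is nonincreasing and, comparing with Riemann sums,
`U(c) ≥ U(1) + ∫_c^1 q ≥ ∫_c^1 q`, with equality for the Baron–Myerson transfer. By Fubini the
expected rent `∫ (∫_c^1 q) f(c) dc` equals `∫ q F`, and `F = (γ - c) f`, so the buyer's surplus is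
at most the expected virtual surplus `∫ (V(q(c)) - γ(c) q(c)) f(c) dc`, with equality for `t*`.
With the threshold `x = G⁻¹(1 - p)` one has `V(p) - γ p = ∫_x^1 (v - γ) g(v) dv`, which increases
in `x` up to `γ` and decreases after it, so it is maximal at `x = min(γ, 1)`, that is at `p = q*(c)`.
-/

open MeasureTheory Set Filter Topology

lemma antitoneOn_of_sub_mul_le_sub {φ U : ℝ → ℝ} {s : Set ℝ}
    (hU : ∀ x ∈ s, ∀ y ∈ s, (y - x) * φ y ≤ U x - U y) : AntitoneOn φ s := by
  intro x hx y hy hxy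
  rcases hxy.eq_or_lt with rfl | hlt
  · rfl
  have h₁ := hU x hx y hy
  have h₂ := hU y hy x hx
  nlinarith

lemma AntitoneOn.sub_mul_le_integral {φ : ℝ → ℝ} {a b x y : ℝ} (hφ : AntitoneOn φ (Icc a b))
    (hx : x ∈ Icc a b) (hy : y ∈ Icc a b) : (y - x) * φ y ≤ ∫ z in x..y, φ z := by
  rcases le_total x y with hxy | hyx
  · have hsub : Icc x y ⊆ Icc a b := Icc_subset_Icc hx.1 hy.2
    calc (y - x) * φ y = ∫ _ in x..y, φ y := by simp
      _ ≤ ∫ z in x..y, φ z :=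
        intervalIntegral.integral_mono_on hxy intervalIntegrable_const
          (hφ.mono (uIcc_subset_Icc hx hy)).intervalIntegrable
          fun z hz => hφ (hsub hz) hy hz.2
  · have hsub : Icc y x ⊆ Icc a b := Icc_subset_Icc hy.1 hx.2
    have h : ∫ z in y..x, φ z ≤ (x - y) * φ y :=
      calc ∫ z in y..x, φ z ≤ ∫ _ in y..x, φ y :=
          intervalIntegral.integral_mono_on hyx (hφ.mono (uIcc_subset_Icc hy hx)).intervalIntegrable
            intervalIntegrable_const fun z hz => hφ hy (hsub hz) hz.1
        _ = (x - y) * φ y := by simp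
    rw [intervalIntegral.integral_symm]
    linarith

/-- Left and right Riemann sums of the antitone `φ` on the uniform partition into `n` pieces differ
by `(b - a) / n * (φ a - φ b)`; the right one is bounded by the telescoping sum of `U`. -/
lemma integral_le_sub_add_of_antitoneOn {φ U : ℝ → ℝ} {a b : ℝ} (hab : a ≤ b)
    (hφ : AntitoneOn φ (Icc a b))
    (hU : ∀ x ∈ Icc a b, ∀ y ∈ Icc a b, x ≤ y → (y - x) * φ y ≤ U x - U y)
    {n : ℕ} (hn : 0 < n) :
    ∫ x in a..b, φ x ≤ U a - U b + (b - a) / n * (φ a - φ b) := by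
  set h := (b - a) / n
  set x : ℕ → ℝ := fun i => a + i * h
  have hh : 0 ≤ h := div_nonneg (sub_nonneg.2 hab) n.cast_nonneg
  have hx_mono : Monotone x := fun i j hij => by simp only [x]; gcongr
  have hx0 : x 0 = a := by simp [x]
  have hxn : x n = b := by simp only [x, h]; field_simp; ring
  have hx_step : ∀ i, x (i + 1) - x i = h := fun i => by simp only [x]; push_cast; ring
  have hx_mem : ∀ i ≤ n, x i ∈ Icc a b := fun i hi =>
    ⟨hx0 ▸ hx_mono (Nat.zero_le i), hxn ▸ hx_mono hi⟩
  have hint : ∀ i < n, IntervalIntegrable φ volume (x i) (x (i + 1)) := fun i hi =>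
    (hφ.mono (uIcc_subset_Icc (hx_mem i hi.le) (hx_mem (i + 1) hi))).intervalIntegrable
  calc ∫ x in a..b, φ x = ∑ i ∈ Finset.range n, ∫ y in x i..x (i + 1), φ y := by
        rw [intervalIntegral.sum_integral_adjacent_intervals, hx0, hxn]
        exact hint
    _ ≤ ∑ i ∈ Finset.range n, h * φ (x i) := by
        gcongr with i hi
        rw [Finset.mem_range] at hi
        calc ∫ y in x i..x (i + 1), φ y ≤ ∫ _ in x i..x (i + 1), φ (x i) :=
              intervalIntegral.integral_mono_on (hx_mono i.le_succ) (hint i hi)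
                intervalIntegrable_const
                fun y hy => hφ (hx_mem i hi.le)
                  ⟨(hx_mem i hi.le).1.trans hy.1, hy.2.trans (hx_mem (i + 1) hi).2⟩ hy.1
          _ = h * φ (x i) := by simp [hx_step]
    _ = ∑ i ∈ Finset.range n, h * φ (x (i + 1)) + h * (φ a - φ b) := by
        rw [← sub_eq_iff_eq_add', ← Finset.sum_sub_distrib,
          Finset.sum_range_sub' (fun i => h * φ (x i)), hx0, hxn, mul_sub]
    _ ≤ ∑ i ∈ Finset.range n, (U (x i) - U (x (i + 1))) + h * (φ a - φ b) := by
        gcongr with i hi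
        rw [Finset.mem_range] at hi
        simpa [hx_step] using hU _ (hx_mem i hi.le) _ (hx_mem (i + 1) hi) (hx_mono i.le_succ)
    _ = U a - U b + h * (φ a - φ b) := by rw [Finset.sum_range_sub', hx0, hxn]

lemma integral_le_sub_of_antitoneOn {φ U : ℝ → ℝ} {a b : ℝ} (hab : a ≤ b)
    (hφ : AntitoneOn φ (Icc a b))
    (hU : ∀ x ∈ Icc a b, ∀ y ∈ Icc a b, x ≤ y → (y - x) * φ y ≤ U x - U y) :
    ∫ x in a..b, φ x ≤ U a - U b := by
  have hlim : Tendsto (fun n : ℕ => U a - U b + (b - a) / n * (φ a - φ b)) atTop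
      (𝓝 (U a - U b)) := by
    simpa using tendsto_const_nhds.add
      ((tendsto_const_div_atTop_nhds_zero_nat (b - a)).mul_const (φ a - φ b))
  exact ge_of_tendsto hlim (eventually_atTop.2
    ⟨1, fun n hn => integral_le_sub_add_of_antitoneOn hab hφ hU hn⟩)

lemma integral_indicator_Ici {f : ℝ → ℝ} {a b c : ℝ} (hc : c ∈ Icc a b) :
    ∫ x in a..b, (Ici c).indicator f x = ∫ x in c..b, f x := by
  rw [intervalIntegral.integral_of_le (hc.1.trans hc.2), intervalIntegral.integral_of_le hc.2,
    integral_congr_ae (ae_restrict_of_ae (indicator_ae_eq_of_ae_eq_set Ioi_ae_eq_Ici.symm)),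
    integral_indicator measurableSet_Ioi, Measure.restrict_restrict measurableSet_Ioi,
    inter_comm, Ioc_inter_Ioi, max_eq_right hc.1]

lemma integral_integral_mul_swap {φ ψ : ℝ → ℝ} {a b : ℝ} (hab : a ≤ b)
    (hφ : IntervalIntegrable φ volume a b) (hψ : IntervalIntegrable ψ volume a b) :
    ∫ c in a..b, (∫ x in c..b, φ x) * ψ c = ∫ x in a..b, φ x * ∫ c in a..x, ψ c := by
  set K : ℝ → ℝ → ℝ := fun c x => {p : ℝ × ℝ | p.1 ≤ p.2}.indicator (fun p => ψ p.1 * φ p.2) (c, x)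
  have hK : IntegrableOn (Function.uncurry K) (uIoc a b ×ˢ uIoc a b) := by
    rw [IntegrableOn, Measure.volume_eq_prod, ← Measure.prod_restrict]
    exact (hψ.def'.mul_prod hφ.def').indicator (measurableSet_le measurable_fst measurable_snd)
  calc ∫ c in a..b, (∫ x in c..b, φ x) * ψ c = ∫ c in a..b, ∫ x in a..b, K c x := by
        refine intervalIntegral.integral_congr_ae (Eventually.of_forall fun c hc => ?_)
        rw [uIoc_of_le hab] at hc
        have : K c = (Ici c).indicator (fun x => ψ c * φ x) := by
          ext x; simp [K, indicator]
        rw [this, integral_indicator_Ici (Ioc_subset_Icc_self hc),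
          intervalIntegral.integral_const_mul, mul_comm]
    _ = ∫ x in a..b, ∫ c in a..b, K c x := intervalIntegral_intervalIntegral_swap hK
    _ = ∫ x in a..b, φ x * ∫ c in a..x, ψ c := by
        refine intervalIntegral.integral_congr_ae (Eventually.of_forall fun x hx => ?_)
        rw [uIoc_of_le hab] at hx
        have : (fun c => K c x) = {c | c ≤ x}.indicator (fun c => ψ c * φ x) := by
          ext c; simp [K, indicator]
        rw [this, intervalIntegral.integral_indicator (Ioc_subset_Icc_self hx),
          intervalIntegral.integral_mul_const, mul_comm]

/-- Gains from trade at cost `k` when trade happens exactly for values `v ≥ x`. -/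
noncomputable def thresholdSurplus (g : ℝ → ℝ) (k x : ℝ) : ℝ := ∫ v in x..1, (v - k) * g v

section thresholdSurplus

variable {g : ℝ → ℝ}

lemma thresholdSurplus_sub_thresholdSurplus (hg : ContinuousOn g (Icc 0 1)) (k : ℝ) {x y : ℝ}
    (hx : x ∈ Icc (0:ℝ) 1) (hy : y ∈ Icc (0:ℝ) 1) :
    thresholdSurplus g k x - thresholdSurplus g k y = ∫ v in x..y, (v - k) * g v := by
  have hcont : ContinuousOn (fun v => (v - k) * g v) (Icc 0 1) :=
    (continuousOn_id.sub continuousOn_const).mul hg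
  have hint : ∀ a ∈ Icc (0:ℝ) 1, ∀ b ∈ Icc (0:ℝ) 1,
      IntervalIntegrable (fun v => (v - k) * g v) volume a b := fun a ha b hb =>
    (hcont.mono (uIcc_subset_Icc ha hb)).intervalIntegrable
  exact sub_eq_of_eq_add (intervalIntegral.integral_add_adjacent_intervals
    (hint x hx y hy) (hint y hy 1 unitInterval.one_mem)).symm

lemma monotoneOn_thresholdSurplus (hg : ContinuousOn g (Icc 0 1))
    (hg0 : ∀ v ∈ Icc (0:ℝ) 1, 0 ≤ g v) (k : ℝ) :
    MonotoneOn (thresholdSurplus g k) (Icc 0 1 ∩ Iic k) := by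
  intro x hx y hy hxy
  rw [← sub_nonpos, thresholdSurplus_sub_thresholdSurplus hg k hx.1 hy.1, ← neg_nonneg,
    ← intervalIntegral.integral_neg]
  refine intervalIntegral.integral_nonneg hxy fun v hv => ?_
  have : v - k ≤ 0 := by linarith [hv.2, mem_Iic.1 hy.2]
  nlinarith [hg0 v ⟨hx.1.1.trans hv.1, hv.2.trans hy.1.2⟩]

lemma antitoneOn_thresholdSurplus (hg : ContinuousOn g (Icc 0 1))
    (hg0 : ∀ v ∈ Icc (0:ℝ) 1, 0 ≤ g v) (k : ℝ) :
    AntitoneOn (thresholdSurplus g k) (Icc 0 1 ∩ Ici k) := by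
  intro x hx y hy hxy
  rw [← sub_nonneg, thresholdSurplus_sub_thresholdSurplus hg k hx.1 hy.1]
  refine intervalIntegral.integral_nonneg hxy fun v hv => ?_
  exact mul_nonneg (by linarith [hv.1, mem_Ici.1 hx.2])
    (hg0 v ⟨hx.1.1.trans hv.1, hv.2.trans hy.1.2⟩)

lemma thresholdSurplus_le_min_one (hg : ContinuousOn g (Icc 0 1))
    (hg0 : ∀ v ∈ Icc (0:ℝ) 1, 0 ≤ g v) {k x : ℝ} (hk : 0 ≤ k) (hx : x ∈ Icc (0:ℝ) 1) :
    thresholdSurplus g k x ≤ thresholdSurplus g k (min k 1) := by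
  have hm : min k 1 ∈ Icc (0:ℝ) 1 := ⟨le_min hk zero_le_one, min_le_right k 1⟩
  rcases le_or_gt x (min k 1) with hxm | hmx
  · exact monotoneOn_thresholdSurplus hg hg0 k ⟨hx, hxm.trans (min_le_left k 1)⟩
      ⟨hm, min_le_left k 1⟩ hxm
  · have hk1 : k < 1 := (min_lt_iff.1 (hmx.trans_le hx.2)).resolve_right (lt_irrefl 1)
    rw [min_eq_left hk1.le] at hmx hm ⊢
    exact antitoneOn_thresholdSurplus hg hg0 k ⟨hm, self_mem_Ici⟩ ⟨hx, hmx.le⟩ hmx.le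

end thresholdSurplus

lemma strictMonoOn_integral_of_pos {g : ℝ → ℝ} {a b : ℝ} (hg : ContinuousOn g (Icc a b))
    (hpos : ∀ x ∈ Icc a b, 0 < g x) : StrictMonoOn (fun x => ∫ s in a..x, g s) (Icc a b) := by
  intro x hx y hy hxy
  have hint : ∀ u ∈ Icc a b, ∀ v ∈ Icc a b, IntervalIntegrable g volume u v := fun u hu v hv =>
    (hg.mono (uIcc_subset_Icc hu hv)).intervalIntegrable
  have ha : a ∈ Icc a b := ⟨le_rfl, hx.1.trans hx.2⟩
  rw [← sub_pos, intervalIntegral.integral_interval_sub_left (hint a ha y hy) (hint a ha x hx)]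
  exact intervalIntegral.intervalIntegral_pos_of_pos_on (hint x hx y hy)
    (fun u hu => hpos u ⟨hx.1.trans hu.1.le, hu.2.le.trans hy.2⟩) hxy

structure IsUpperThresholdSurplus (g G Ginv V : ℝ → ℝ) : Prop where
  continuousOn : ContinuousOn g (Icc 0 1)
  pos : ∀ x ∈ Icc (0:ℝ) 1, 0 < g x
  cdf_eq : ∀ x, G x = ∫ s in (0:ℝ)..x, g s
  cdf_one : G 1 = 1
  inv_mem : ∀ p ∈ Icc (0:ℝ) 1, Ginv p ∈ Icc (0:ℝ) 1
  cdf_inv : ∀ p ∈ Icc (0:ℝ) 1, G (Ginv p) = p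
  surplus_eq : ∀ q ∈ Icc (0:ℝ) 1, V q = ∫ v in Ginv (1 - q)..1, v * g v

namespace IsUpperThresholdSurplus

variable {g G Ginv V : ℝ → ℝ}

lemma nonneg (h : IsUpperThresholdSurplus g G Ginv V) : ∀ x ∈ Icc (0:ℝ) 1, 0 ≤ g x :=
  fun x hx => (h.pos x hx).le

lemma strictMonoOn_cdf (h : IsUpperThresholdSurplus g G Ginv V) : StrictMonoOn G (Icc 0 1) := by
  rw [funext h.cdf_eq]
  exact strictMonoOn_integral_of_pos h.continuousOn h.pos

lemma cdf_mem (h : IsUpperThresholdSurplus g G Ginv V) {x : ℝ} (hx : x ∈ Icc (0:ℝ) 1) :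
    G x ∈ Icc (0:ℝ) 1 := by
  have hG0 : G 0 = 0 := by simp [h.cdf_eq]
  have hmono := h.strictMonoOn_cdf.monotoneOn
  exact ⟨hG0 ▸ hmono unitInterval.zero_mem hx hx.1,
    h.cdf_one ▸ hmono hx unitInterval.one_mem hx.2⟩

lemma inv_cdf (h : IsUpperThresholdSurplus g G Ginv V) {x : ℝ} (hx : x ∈ Icc (0:ℝ) 1) :
    Ginv (G x) = x :=
  h.strictMonoOn_cdf.injOn (h.inv_mem _ (h.cdf_mem hx)) hx (h.cdf_inv _ (h.cdf_mem hx))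

lemma monotoneOn_inv (h : IsUpperThresholdSurplus g G Ginv V) : MonotoneOn Ginv (Icc 0 1) :=
  fun p hp p' hp' hpp' => (h.strictMonoOn_cdf.le_iff_le (h.inv_mem p hp) (h.inv_mem p' hp')).1
    (by rwa [h.cdf_inv p hp, h.cdf_inv p' hp'])

lemma inv_one_sub_mem (h : IsUpperThresholdSurplus g G Ginv V) {p : ℝ} (hp : p ∈ Icc (0:ℝ) 1) :
    Ginv (1 - p) ∈ Icc (0:ℝ) 1 :=
  h.inv_mem _ (Icc.mem_iff_one_sub_mem.1 hp)

lemma sub_mul_eq_thresholdSurplus (h : IsUpperThresholdSurplus g G Ginv V) (k : ℝ) {p : ℝ}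
    (hp : p ∈ Icc (0:ℝ) 1) : V p - k * p = thresholdSurplus g k (Ginv (1 - p)) := by
  have ha := h.inv_one_sub_mem hp
  have hint : ∀ x ∈ Icc (0:ℝ) 1, ∀ y ∈ Icc (0:ℝ) 1, IntervalIntegrable g volume x y :=
    fun x hx y hy => (h.continuousOn.mono (uIcc_subset_Icc hx hy)).intervalIntegrable
  have hkp : k * p = ∫ v in Ginv (1 - p)..1, k * g v := by
    rw [intervalIntegral.integral_const_mul, ← intervalIntegral.integral_interval_sub_left
      (hint 0 unitInterval.zero_mem 1 unitInterval.one_mem) (hint 0 unitInterval.zero_mem _ ha),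
      ← h.cdf_eq, ← h.cdf_eq, h.cdf_one, h.cdf_inv _ (Icc.mem_iff_one_sub_mem.1 hp),
      sub_sub_cancel]
  have hvg : IntervalIntegrable (fun v => v * g v) volume (Ginv (1 - p)) 1 :=
    ((continuousOn_id.mul h.continuousOn).mono
      (uIcc_subset_Icc ha unitInterval.one_mem)).intervalIntegrable
  rw [h.surplus_eq p hp, thresholdSurplus, hkp,
    ← intervalIntegral.integral_sub hvg ((hint _ ha 1 unitInterval.one_mem).const_mul k)]
  simp_rw [sub_mul]

lemma monotoneOn (h : IsUpperThresholdSurplus g G Ginv V) : MonotoneOn V (Icc 0 1) := by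
  have hthr : AntitoneOn (fun p => Ginv (1 - p)) (Icc 0 1) := fun p hp p' hp' hpp' =>
    h.monotoneOn_inv (Icc.mem_iff_one_sub_mem.1 hp') (Icc.mem_iff_one_sub_mem.1 hp) (by linarith)
  refine ((antitoneOn_thresholdSurplus h.continuousOn h.nonneg 0).comp hthr
    fun p hp => ⟨h.inv_one_sub_mem hp, (h.inv_one_sub_mem hp).1⟩).congr fun p hp => ?_
  simpa using (h.sub_mul_eq_thresholdSurplus 0 hp).symm

lemma sub_mul_le_min_one (h : IsUpperThresholdSurplus g G Ginv V) {k p : ℝ} (hk : 0 ≤ k)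
    (hp : p ∈ Icc (0:ℝ) 1) :
    V p - k * p ≤ V (1 - G (min k 1)) - k * (1 - G (min k 1)) := by
  have hm : min k 1 ∈ Icc (0:ℝ) 1 := ⟨le_min hk zero_le_one, min_le_right k 1⟩
  rw [h.sub_mul_eq_thresholdSurplus k hp,
    h.sub_mul_eq_thresholdSurplus k (Icc.mem_iff_one_sub_mem.1 (h.cdf_mem hm)), sub_sub_cancel,
    h.inv_cdf hm]
  exact thresholdSurplus_le_min_one h.continuousOn h.nonneg hk (h.inv_one_sub_mem hp)

lemma one_sub_cdf_min_mem (h : IsUpperThresholdSurplus g G Ginv V) {k : ℝ} (hk : 0 ≤ k) :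
    1 - G (min k 1) ∈ Icc (0:ℝ) 1 :=
  Icc.mem_iff_one_sub_mem.1 (h.cdf_mem ⟨le_min hk zero_le_one, min_le_right k 1⟩)

lemma antitoneOn_one_sub_cdf_min (h : IsUpperThresholdSurplus g G Ginv V) {γ : ℝ → ℝ}
    (hγ : MonotoneOn γ (Icc 0 1)) (hγ0 : ∀ c ∈ Icc (0:ℝ) 1, 0 ≤ γ c) :
    AntitoneOn (fun c => 1 - G (min (γ c) 1)) (Icc 0 1) := fun x hx y hy hxy =>
  sub_le_sub_left (h.strictMonoOn_cdf.monotoneOn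
    ⟨le_min (hγ0 x hx) zero_le_one, min_le_right _ 1⟩
    ⟨le_min (hγ0 y hy) zero_le_one, min_le_right _ 1⟩
    (min_le_min_right 1 (hγ hx hy hxy))) 1

end IsUpperThresholdSurplus

def IncentiveCompatible (q t : ℝ → ℝ) : Prop :=
  ∀ c ∈ Icc (0:ℝ) 1, ∀ c' ∈ Icc (0:ℝ) 1, t c' - c * q c' ≤ t c - c * q c

def IndividuallyRational (q t : ℝ → ℝ) : Prop :=
  ∀ c ∈ Icc (0:ℝ) 1, 0 ≤ t c - c * q c

noncomputable def baronMyersonTransfer (q : ℝ → ℝ) (c : ℝ) : ℝ := c * q c + ∫ x in c..1, q x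

section Mechanism

variable {q t : ℝ → ℝ}

lemma IncentiveCompatible.sub_mul_le (h : IncentiveCompatible q t) {x y : ℝ}
    (hx : x ∈ Icc (0:ℝ) 1) (hy : y ∈ Icc (0:ℝ) 1) :
    (y - x) * q y ≤ (t x - x * q x) - (t y - y * q y) := by
  linarith [h x hx y hy]

lemma IncentiveCompatible.antitoneOn (h : IncentiveCompatible q t) : AntitoneOn q (Icc 0 1) :=
  antitoneOn_of_sub_mul_le_sub fun _ hx _ hy => h.sub_mul_le hx hy

lemma IncentiveCompatible.baronMyersonTransfer_le (hIC : IncentiveCompatible q t)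
    (hIR : IndividuallyRational q t) {c : ℝ} (hc : c ∈ Icc (0:ℝ) 1) :
    baronMyersonTransfer q c ≤ t c := by
  have hsub : Icc c 1 ⊆ Icc 0 1 := Icc_subset_Icc_left hc.1
  have := integral_le_sub_of_antitoneOn hc.2 (hIC.antitoneOn.mono hsub)
    fun x hx y hy _ => hIC.sub_mul_le (hsub hx) (hsub hy)
  rw [baronMyersonTransfer]
  linarith [hIR 1 unitInterval.one_mem]

lemma AntitoneOn.incentiveCompatible_baronMyersonTransfer (hq : AntitoneOn q (Icc 0 1)) :
    IncentiveCompatible q (baronMyersonTransfer q) := by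
  intro c hc c' hc'
  have hint : ∀ x ∈ Icc (0:ℝ) 1, ∀ y ∈ Icc (0:ℝ) 1, IntervalIntegrable q volume x y :=
    fun x hx y hy => (hq.mono (uIcc_subset_Icc hx hy)).intervalIntegrable
  have := hq.sub_mul_le_integral hc hc'
  rw [baronMyersonTransfer, baronMyersonTransfer,
    ← intervalIntegral.integral_add_adjacent_intervals (hint c hc c' hc')
      (hint c' hc' 1 unitInterval.one_mem)]
  linarith

lemma individuallyRational_baronMyersonTransfer (hq : ∀ x ∈ Icc (0:ℝ) 1, 0 ≤ q x) :
    IndividuallyRational q (baronMyersonTransfer q) := by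
  intro c hc
  rw [baronMyersonTransfer, add_sub_cancel_left]
  exact intervalIntegral.integral_nonneg hc.2 fun x hx => hq x ⟨hc.1.trans hx.1, hx.2⟩

lemma intervalIntegrable_baronMyersonTransfer (hq : IntervalIntegrable q volume 0 1) :
    IntervalIntegrable (baronMyersonTransfer q) volume 0 1 :=
  (hq.continuousOn_mul continuousOn_id).add
    (intervalIntegral.continuousOn_primitive_interval_left
      ((intervalIntegrable_iff' (f := q)).1 hq)).intervalIntegrable

end Mechanism

section VirtualCost

variable {f F γ : ℝ → ℝ}

lemma integral_baronMyersonTransfer_mul (hf : ContinuousOn f (Icc 0 1))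
    (hF : ∀ x, F x = ∫ s in (0:ℝ)..x, f s) (hγ : ∀ c ∈ Icc (0:ℝ) 1, F c = (γ c - c) * f c)
    {q : ℝ → ℝ} (hq : IntervalIntegrable q volume 0 1) :
    ∫ c in (0:ℝ)..1, baronMyersonTransfer q c * f c = ∫ c in (0:ℝ)..1, γ c * q c * f c := by
  replace hf : ContinuousOn f (uIcc 0 1) := by rwa [uIcc_of_le zero_le_one]
  have hF_cont : ContinuousOn F (uIcc 0 1) := by
    rw [funext hF]
    exact intervalIntegral.continuousOn_primitive_interval (hf.integrableOn_compact isCompact_uIcc)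
  have hcq : IntervalIntegrable (fun c => c * q c * f c) volume 0 1 :=
    (hq.continuousOn_mul continuousOn_id).mul_continuousOn hf
  have hR : IntervalIntegrable (fun c => (∫ x in c..1, q x) * f c) volume 0 1 :=
    ((intervalIntegral.continuousOn_primitive_interval_left
      ((intervalIntegrable_iff' (f := q)).1 hq)).mul hf).intervalIntegrable
  calc ∫ c in (0:ℝ)..1, baronMyersonTransfer q c * f c
      = ∫ c in (0:ℝ)..1, c * q c * f c + (∫ x in c..1, q x) * f c := by
        simp_rw [baronMyersonTransfer, add_mul]
    _ = (∫ c in (0:ℝ)..1, c * q c * f c) + ∫ c in (0:ℝ)..1, q c * F c := by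
        rw [intervalIntegral.integral_add hcq hR,
          integral_integral_mul_swap zero_le_one hq hf.intervalIntegrable, funext hF]
    _ = ∫ c in (0:ℝ)..1, γ c * q c * f c := by
        rw [← intervalIntegral.integral_add hcq (hq.mul_continuousOn hF_cont)]
        refine intervalIntegral.integral_congr fun c hc => ?_
        rw [uIcc_of_le zero_le_one] at hc
        simp only [hγ c hc]
        ring

lemma intervalIntegrable_virtualSurplus (hf : ContinuousOn f (Icc 0 1))
    (hγ_cont : ContinuousOn γ (Icc 0 1)) {W q : ℝ → ℝ} (hW : MonotoneOn W (Icc 0 1))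
    (hq : AntitoneOn q (Icc 0 1)) (hq_mem : ∀ c ∈ Icc (0:ℝ) 1, q c ∈ Icc (0:ℝ) 1) :
    IntervalIntegrable (fun c => (W (q c) - γ c * q c) * f c) volume 0 1 := by
  have hI : uIcc (0:ℝ) 1 ⊆ Icc 0 1 := uIcc_subset_Icc unitInterval.zero_mem unitInterval.one_mem
  exact ((((hW.comp_AntitoneOn hq hq_mem).mono hI).intervalIntegrable.sub
    ((hq.mono hI).intervalIntegrable.continuousOn_mul (hγ_cont.mono hI))).mul_continuousOn
    (hf.mono hI))

lemma integral_sub_baronMyersonTransfer_mul (hf : ContinuousOn f (Icc 0 1))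
    (hF : ∀ x, F x = ∫ s in (0:ℝ)..x, f s) (hγ : ∀ c ∈ Icc (0:ℝ) 1, F c = (γ c - c) * f c)
    (hγ_cont : ContinuousOn γ (Icc 0 1)) {W q : ℝ → ℝ} (hW : MonotoneOn W (Icc 0 1))
    (hq : AntitoneOn q (Icc 0 1)) (hq_mem : ∀ c ∈ Icc (0:ℝ) 1, q c ∈ Icc (0:ℝ) 1) :
    ∫ c in (0:ℝ)..1, (W (q c) - baronMyersonTransfer q c) * f c =
      ∫ c in (0:ℝ)..1, (W (q c) - γ c * q c) * f c := by
  have hI : uIcc (0:ℝ) 1 ⊆ Icc 0 1 := uIcc_subset_Icc unitInterval.zero_mem unitInterval.one_mem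
  have hq_int : IntervalIntegrable q volume 0 1 := (hq.mono hI).intervalIntegrable
  have hWf : IntervalIntegrable (fun c => W (q c) * f c) volume 0 1 :=
    ((hW.comp_AntitoneOn hq hq_mem).mono hI).intervalIntegrable.mul_continuousOn (hf.mono hI)
  simp_rw [sub_mul]
  rw [intervalIntegral.integral_sub hWf
      ((intervalIntegrable_baronMyersonTransfer hq_int).mul_continuousOn (hf.mono hI)),
    intervalIntegral.integral_sub hWf
      ((hq_int.continuousOn_mul (hγ_cont.mono hI)).mul_continuousOn (hf.mono hI)),
    integral_baronMyersonTransfer_mul hf hF hγ hq_int]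

lemma IncentiveCompatible.integral_sub_mul_le (hf : ContinuousOn f (Icc 0 1))
    (hf0 : ∀ c ∈ Icc (0:ℝ) 1, 0 ≤ f c) (hF : ∀ x, F x = ∫ s in (0:ℝ)..x, f s)
    (hγ : ∀ c ∈ Icc (0:ℝ) 1, F c = (γ c - c) * f c) (hγ_cont : ContinuousOn γ (Icc 0 1))
    {W q t : ℝ → ℝ} (hW : MonotoneOn W (Icc 0 1)) (hq_mem : ∀ c ∈ Icc (0:ℝ) 1, q c ∈ Icc (0:ℝ) 1)
    (hIC : IncentiveCompatible q t) (hIR : IndividuallyRational q t) :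
    ∫ c in (0:ℝ)..1, (W (q c) - t c) * f c ≤ ∫ c in (0:ℝ)..1, (W (q c) - γ c * q c) * f c := by
  have hI : uIcc (0:ℝ) 1 ⊆ Icc 0 1 := uIcc_subset_Icc unitInterval.zero_mem unitInterval.one_mem
  have hq_int : IntervalIntegrable q volume 0 1 := (hIC.antitoneOn.mono hI).intervalIntegrable
  have hWq : IntervalIntegrable (fun c => W (q c)) volume 0 1 :=
    ((hW.comp_AntitoneOn hIC.antitoneOn hq_mem).mono hI).intervalIntegrable
  have hU : AntitoneOn (fun c => t c - c * q c) (Icc 0 1) := fun x hx y hy hxy => by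
    nlinarith [hIC.sub_mul_le hx hy, (hq_mem y hy).1]
  have ht_int : IntervalIntegrable t volume 0 1 := by
    simpa using (hU.mono hI).intervalIntegrable.add (hq_int.continuousOn_mul continuousOn_id)
  calc ∫ c in (0:ℝ)..1, (W (q c) - t c) * f c
      ≤ ∫ c in (0:ℝ)..1, (W (q c) - baronMyersonTransfer q c) * f c := by
        refine intervalIntegral.integral_mono_on zero_le_one
          ((hWq.sub ht_int).mul_continuousOn (hf.mono hI))
          ((hWq.sub (intervalIntegrable_baronMyersonTransfer hq_int)).mul_continuousOn (hf.mono hI))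
          fun c hc => mul_le_mul_of_nonneg_right ?_ (hf0 c hc)
        linarith [hIC.baronMyersonTransfer_le hIR hc]
    _ = ∫ c in (0:ℝ)..1, (W (q c) - γ c * q c) * f c :=
        integral_sub_baronMyersonTransfer_mul hf hF hγ hγ_cont hW hIC.antitoneOn hq_mem

end VirtualCost

theorem stmt_7_general
    (f g F G Ginv γ : ℝ → ℝ)
    (hf_cont : ContinuousOn f (Icc 0 1))
    (hf_pos : ∀ x ∈ Icc (0:ℝ) 1, 0 < f x)
    (hg_cont : ContinuousOn g (Icc 0 1))
    (hg_pos : ∀ x ∈ Icc (0:ℝ) 1, 0 < g x)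
    (hg_mass : ∫ x in (0:ℝ)..1, g x = 1)
    (hF : ∀ x, F x = ∫ s in (0:ℝ)..x, f s)
    (hG : ∀ x, G x = ∫ s in (0:ℝ)..x, g s)
    (hγ : ∀ c ∈ Icc (0:ℝ) 1, γ c = c + F c / f c)
    (hγ_cont : ContinuousOn γ (Icc 0 1))
    (hγ_mono : StrictMonoOn γ (Icc 0 1))
    (hGinv_mem : ∀ p ∈ Icc (0:ℝ) 1, Ginv p ∈ Icc (0:ℝ) 1)
    (hGinv : ∀ p ∈ Icc (0:ℝ) 1, G (Ginv p) = p)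
    (V qstar tstar : ℝ → ℝ)
    (hV : ∀ q ∈ Icc (0:ℝ) 1, V q = ∫ v in (Ginv (1 - q))..1, v * g v)
    (hqstar : ∀ c, qstar c = 1 - G (min (γ c) 1))
    (htstar : ∀ c, tstar c = c * qstar c + ∫ x in c..1, qstar x) :
    (∀ c ∈ Icc (0:ℝ) 1, ∀ c' ∈ Icc (0:ℝ) 1,
        tstar c' - c * qstar c' ≤ tstar c - c * qstar c) ∧
    (∀ c ∈ Icc (0:ℝ) 1, 0 ≤ tstar c - c * qstar c) ∧
    (∀ q t : ℝ → ℝ, Measurable q → Measurable t →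
      (∀ c ∈ Icc (0:ℝ) 1, q c ∈ Icc (0:ℝ) 1) →
      (∀ c ∈ Icc (0:ℝ) 1, ∀ c' ∈ Icc (0:ℝ) 1, t c' - c * q c' ≤ t c - c * q c) →
      (∀ c ∈ Icc (0:ℝ) 1, 0 ≤ t c - c * q c) →
      (∫ c in (0:ℝ)..1, (V (q c) - t c) * f c) ≤
        ∫ c in (0:ℝ)..1, (V (qstar c) - tstar c) * f c) := by
  have hVG : IsUpperThresholdSurplus g G Ginv V :=
    ⟨hg_cont, hg_pos, hG, (hG 1).trans hg_mass, hGinv_mem, hGinv, hV⟩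
  have hFγ : ∀ c ∈ Icc (0:ℝ) 1, F c = (γ c - c) * f c := fun c hc => by
    rw [hγ c hc, add_sub_cancel_left, div_mul_cancel₀ _ (hf_pos c hc).ne']
  have hγ_nonneg : ∀ c ∈ Icc (0:ℝ) 1, 0 ≤ γ c := fun c hc => by
    have hF_nonneg : 0 ≤ F c := hF c ▸ intervalIntegral.integral_nonneg hc.1
      fun x hx => (hf_pos x ⟨hx.1, hx.2.trans hc.2⟩).le
    rw [hγ c hc]
    exact add_nonneg hc.1 (div_nonneg hF_nonneg (hf_pos c hc).le)
  have hqstar_mem : ∀ c ∈ Icc (0:ℝ) 1, qstar c ∈ Icc (0:ℝ) 1 := fun c hc =>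
    hqstar c ▸ hVG.one_sub_cdf_min_mem (hγ_nonneg c hc)
  have hqstar_anti : AntitoneOn qstar (Icc 0 1) := by
    rw [funext hqstar]
    exact hVG.antitoneOn_one_sub_cdf_min hγ_mono.monotoneOn hγ_nonneg
  obtain rfl : tstar = baronMyersonTransfer qstar := funext htstar
  refine ⟨hqstar_anti.incentiveCompatible_baronMyersonTransfer,
    individuallyRational_baronMyersonTransfer fun c hc => (hqstar_mem c hc).1,
    fun q t _ _ hq hIC hIR => ?_⟩
  calc ∫ c in (0:ℝ)..1, (V (q c) - t c) * f c
      ≤ ∫ c in (0:ℝ)..1, (V (q c) - γ c * q c) * f c :=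
        IncentiveCompatible.integral_sub_mul_le hf_cont (fun c hc => (hf_pos c hc).le) hF hFγ
          hγ_cont hVG.monotoneOn hq hIC hIR
    _ ≤ ∫ c in (0:ℝ)..1, (V (qstar c) - γ c * qstar c) * f c := by
        refine intervalIntegral.integral_mono_on zero_le_one
          (intervalIntegrable_virtualSurplus hf_cont hγ_cont hVG.monotoneOn
            (IncentiveCompatible.antitoneOn hIC) hq)
          (intervalIntegrable_virtualSurplus hf_cont hγ_cont hVG.monotoneOn hqstar_anti hqstar_mem)
          fun c hc => mul_le_mul_of_nonneg_right ?_ (hf_pos c hc).le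
        rw [hqstar c]
        exact hVG.sub_mul_le_min_one (hγ_nonneg c hc) (hq c hc)
    _ = ∫ c in (0:ℝ)..1, (V (qstar c) - baronMyersonTransfer qstar c) * f c :=
        (integral_sub_baronMyersonTransfer_mul hf_cont hF hFγ hγ_cont hVG.monotoneOn hqstar_anti
          hqstar_mem).symm

/-- **Proposition 1 core (Buyer-Optimal Mechanism).** The allocation
`q*(c) = 1 − G(min{γ(c),1})` with the Baron–Myerson transfer
`t*(c) = c·q*(c) + ∫_c^1 q*(x) dx` is incentive compatible, individually rational, and
maximizes the buyer's expected surplus `∫ (V(q(c)) − t(c)) f(c) dc` among all incentive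
compatible, individually rational pairs `(q, t)`. -/
theorem stmt_7
    (f g F G Ginv γ : ℝ → ℝ) (cbar : ℝ)
    (hf_cont : ContinuousOn f (Icc 0 1))
    (hf_pos : ∀ x ∈ Icc (0:ℝ) 1, 0 < f x)
    (hf_mass : ∫ x in (0:ℝ)..1, f x = 1)
    (hg_cont : ContinuousOn g (Icc 0 1))
    (hg_pos : ∀ x ∈ Icc (0:ℝ) 1, 0 < g x)
    (hg_mass : ∫ x in (0:ℝ)..1, g x = 1)
    (hF : ∀ x, F x = ∫ s in (0:ℝ)..x, f s)
    (hG : ∀ x, G x = ∫ s in (0:ℝ)..x, g s)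
    (hγ : ∀ c ∈ Icc (0:ℝ) 1, γ c = c + F c / f c)
    (hγ_cont : ContinuousOn γ (Icc 0 1))
    (hγ_mono : StrictMonoOn γ (Icc 0 1))
    (hcbar : cbar ∈ Icc (0:ℝ) 1) (hγcbar : γ cbar = 1)
    (hGinv_mem : ∀ p ∈ Icc (0:ℝ) 1, Ginv p ∈ Icc (0:ℝ) 1)
    (hGinv : ∀ p ∈ Icc (0:ℝ) 1, G (Ginv p) = p)
    (V qstar tstar : ℝ → ℝ)
    (hV : ∀ q ∈ Icc (0:ℝ) 1, V q = ∫ v in (Ginv (1 - q))..1, v * g v)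
    (hqstar : ∀ c, qstar c = 1 - G (min (γ c) 1))
    (htstar : ∀ c, tstar c = c * qstar c + ∫ x in c..1, qstar x) :
    (∀ c ∈ Icc (0:ℝ) 1, ∀ c' ∈ Icc (0:ℝ) 1,
        tstar c' - c * qstar c' ≤ tstar c - c * qstar c) ∧
    (∀ c ∈ Icc (0:ℝ) 1, 0 ≤ tstar c - c * qstar c) ∧
    (∀ q t : ℝ → ℝ, Measurable q → Measurable t →
      (∀ c ∈ Icc (0:ℝ) 1, q c ∈ Icc (0:ℝ) 1) →
      (∀ c ∈ Icc (0:ℝ) 1, ∀ c' ∈ Icc (0:ℝ) 1, t c' - c * q c' ≤ t c - c * q c) →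
      (∀ c ∈ Icc (0:ℝ) 1, 0 ≤ t c - c * q c) →
      (∫ c in (0:ℝ)..1, (V (q c) - t c) * f c) ≤
        ∫ c in (0:ℝ)..1, (V (qstar c) - tstar c) * f c) :=
  stmt_7_general f g F G Ginv γ hf_cont hf_pos hg_cont hg_pos hg_mass hF hG hγ hγ_cont hγ_mono
    hGinv_mem hGinv V qstar tstar hV hqstar htstar
end

section
/- Let f and g be continuous strictly positive densities on [0,1] with CDFs F and G, suppose γ(c) = c + F(c)/f(c) is continuous and strictly increasing, let c̄ solve γ(c̄) = 1, and let y(v) = E_{ṽ∼G}[γ⁻¹(ṽ) | ṽ ≥ v] for v ∈ [0,1), extended by y(1) = γ⁻¹(1) = c̄. Define the demand D(p) = G({v ∈ [0,1] : y(v) ≥ p}). Then for every c ∈ [0, c̄], the price p*(c) = y(γ(c)) maximizes the profit (p − c)·D(p) over all p ∈ ℝ; and for every c > c̄, sup_{p∈ℝ} (p − c)·D(p) = 0. -/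
open MeasureTheory Set Filter Topology

/-- **Seller optimality in Proposition 1.** Facing the demand
`D(p) = Pr_{v∼G}(y(v) ≥ p)` generated by the buyer-optimal algorithm, each active type
`c ≤ c̄` maximizes profit `(p − c)·D(p)` at the price `p*(c) = y(γ(c))`, and each type
`c > c̄` can obtain at most (and exactly) zero profit. -/
theorem stmt_8
    (f g F G γ γinv y : ℝ → ℝ) (cbar : ℝ)
    (hf_cont : ContinuousOn f (Icc 0 1))
    (hf_pos : ∀ x ∈ Icc (0:ℝ) 1, 0 < f x)
    (hf_mass : ∫ x in (0:ℝ)..1, f x = 1)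
    (hg_cont : ContinuousOn g (Icc 0 1))
    (hg_pos : ∀ x ∈ Icc (0:ℝ) 1, 0 < g x)
    (hg_mass : ∫ x in (0:ℝ)..1, g x = 1)
    (hF : ∀ x, F x = ∫ s in (0:ℝ)..x, f s)
    (hG : ∀ x, G x = ∫ s in (0:ℝ)..x, g s)
    (hγ : ∀ c ∈ Icc (0:ℝ) 1, γ c = c + F c / f c)
    (hγ_cont : ContinuousOn γ (Icc 0 1))
    (hγ_mono : StrictMonoOn γ (Icc 0 1))
    (hcbar : cbar ∈ Icc (0:ℝ) 1) (hγcbar : γ cbar = 1)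
    (hinv_mem : ∀ x ∈ Icc (0:ℝ) 1, γinv x ∈ Icc 0 cbar)
    (hinv : ∀ x ∈ Icc (0:ℝ) 1, γ (γinv x) = x)
    (hy : ∀ v ∈ Ico (0:ℝ) 1, y v = (∫ x in v..1, γinv x * g x) / (1 - G v))
    (hy1 : y 1 = cbar)
    (D : ℝ → ℝ)
    (hD : ∀ p, D p = ∫ v in Icc (0:ℝ) 1, (if p ≤ y v then g v else 0)) :
    (∀ c ∈ Icc (0:ℝ) cbar, ∀ p : ℝ,
      (p - c) * D p ≤ (y (γ c) - c) * D (y (γ c))) ∧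
    (∀ c : ℝ, cbar < c →
      (∀ p : ℝ, (p - c) * D p ≤ 0) ∧ (∃ p : ℝ, (p - c) * D p = 0)) := by
  have hcb1 : cbar ≤ 1 := hcbar.2
  have hIsub : Icc (0:ℝ) cbar ⊆ Icc 0 1 := Icc_subset_Icc le_rfl hcb1
  have h01 : (0:ℝ) ∈ Icc (0:ℝ) 1 := ⟨le_rfl, zero_le_one⟩
  have h11 : (1:ℝ) ∈ Icc (0:ℝ) 1 := ⟨zero_le_one, le_rfl⟩
  -- integrability of `g`
  have hg_int : IntegrableOn g (Icc 0 1) := hg_cont.integrableOn_Icc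
  have hg_ii : ∀ a ∈ Icc (0:ℝ) 1, ∀ b ∈ Icc (0:ℝ) 1, IntervalIntegrable g volume a b :=
    fun a ha b hb => (hg_int.mono_set (uIcc_subset_Icc ha hb)).intervalIntegrable
  -- monotonicity of γinv
  have hmono_inv : MonotoneOn γinv (Icc 0 1) := by
    intro a ha b hb hab
    have h1 := hinv_mem a ha
    have h2 := hinv_mem b hb
    have h1' : γinv a ∈ Icc (0:ℝ) 1 := ⟨h1.1, h1.2.trans hcb1⟩
    have h2' : γinv b ∈ Icc (0:ℝ) 1 := ⟨h2.1, h2.2.trans hcb1⟩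
    have hle := hγ_mono.le_iff_le h1' h2'
    rw [hinv a ha, hinv b hb] at hle
    exact hle.mp hab
  -- integrability of γinv * g
  have hg_meas : AEMeasurable g (volume.restrict (Icc (0:ℝ) 1)) :=
    hg_cont.aemeasurable measurableSet_Icc
  have hinv_meas : AEMeasurable γinv (volume.restrict (Icc (0:ℝ) 1)) :=
    aemeasurable_restrict_of_monotoneOn measurableSet_Icc hmono_inv
  have hq_int : IntegrableOn (fun x => γinv x * g x) (Icc 0 1) volume := by
    refine Integrable.mono' (hg_int.const_mul cbar) (hinv_meas.mul hg_meas).aestronglyMeasurable ?_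
    filter_upwards [ae_restrict_mem measurableSet_Icc] with x hx
    have h1 := hinv_mem x hx
    have h2 := (hg_pos x hx).le
    rw [Real.norm_eq_abs, abs_mul, abs_of_nonneg h1.1, abs_of_nonneg h2]
    exact mul_le_mul_of_nonneg_right h1.2 h2
  have hqc_int : ∀ c : ℝ, IntegrableOn (fun x => (γinv x - c) * g x) (Icc 0 1) volume := by
    intro c
    have heq : (fun x => (γinv x - c) * g x) = fun x => γinv x * g x - c * g x := by
      funext x; ring
    rw [heq]
    exact hq_int.sub (hg_int.const_mul c)
  have hq_ii : ∀ a ∈ Icc (0:ℝ) 1, ∀ b ∈ Icc (0:ℝ) 1,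
      IntervalIntegrable (fun x => γinv x * g x) volume a b :=
    fun a ha b hb => (hq_int.mono_set (uIcc_subset_Icc ha hb)).intervalIntegrable
  have hqc_ii : ∀ c : ℝ, ∀ a ∈ Icc (0:ℝ) 1, ∀ b ∈ Icc (0:ℝ) 1,
      IntervalIntegrable (fun x => (γinv x - c) * g x) volume a b :=
    fun c a ha b hb => ((hqc_int c).mono_set (uIcc_subset_Icc ha hb)).intervalIntegrable
  -- basic facts about G
  have hG1 : G 1 = 1 := by rw [hG]; exact hg_mass
  have hGdiff : ∀ a ∈ Icc (0:ℝ) 1, ∀ b ∈ Icc (0:ℝ) 1, G b - G a = ∫ s in a..b, g s := by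
    intro a ha b hb
    rw [hG, hG]
    exact intervalIntegral.integral_interval_sub_left (hg_ii 0 h01 b hb) (hg_ii 0 h01 a ha)
  have hGmono : ∀ a ∈ Icc (0:ℝ) 1, ∀ b ∈ Icc (0:ℝ) 1, a ≤ b → G a ≤ G b := by
    intro a ha b hb hab
    have hd := hGdiff a ha b hb
    have hnn : 0 ≤ ∫ s in a..b, g s :=
      intervalIntegral.integral_nonneg hab
        (fun x hx => (hg_pos x ⟨ha.1.trans hx.1, hx.2.trans hb.2⟩).le)
    linarith
  have hGint1 : ∀ v ∈ Icc (0:ℝ) 1, (1:ℝ) - G v = ∫ s in v..1, g s := by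
    intro v hv
    have := hGdiff v hv 1 h11
    rw [hG1] at this
    linarith
  have hGlt : ∀ v ∈ Ico (0:ℝ) 1, 0 < 1 - G v := by
    intro v hv
    have hd := hGint1 v ⟨hv.1, hv.2.le⟩
    have hpos : 0 < ∫ s in v..1, g s := by
      apply intervalIntegral.intervalIntegral_pos_of_pos_on (hg_ii v ⟨hv.1, hv.2.le⟩ 1 h11) ?_ hv.2
      intro x hx
      exact hg_pos x ⟨hv.1.trans hx.1.le, hx.2.le⟩
    linarith
  -- the fundamental identity for y
  have hyid : ∀ w ∈ Icc (0:ℝ) 1, y w * (1 - G w) = ∫ x in w..1, γinv x * g x := by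
    intro w hw
    rcases eq_or_lt_of_le hw.2 with h1 | h1
    · rw [h1, hG1, intervalIntegral.integral_same]
      ring
    · have hne : 1 - G w ≠ 0 := (hGlt w ⟨hw.1, h1⟩).ne'
      rw [hy w ⟨hw.1, h1⟩, div_mul_cancel₀ _ hne]
  have hΦid : ∀ c : ℝ, ∀ w ∈ Icc (0:ℝ) 1,
      (y w - c) * (1 - G w) = ∫ x in w..1, (γinv x - c) * g x := by
    intro c w hw
    have h1 := hyid w hw
    have h2 := hGint1 w hw
    have h3 : ∫ x in w..1, (γinv x - c) * g x
        = (∫ x in w..1, γinv x * g x) - c * ∫ s in w..1, g s := by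
      rw [← intervalIntegral.integral_const_mul,
        ← intervalIntegral.integral_sub (hq_ii w hw 1 h11)
          ((hg_ii w hw 1 h11).const_mul c)]
      congr 1
      funext x
      ring
    rw [h3, ← h1, ← h2]
    ring
  -- y dominates γinv
  have hy_ge : ∀ v ∈ Icc (0:ℝ) 1, γinv v ≤ y v := by
    intro v hv
    rcases eq_or_lt_of_le hv.2 with h1 | h1
    · rw [h1, hy1]
      exact (hinv_mem 1 h11).2
    · have hGpos := hGlt v ⟨hv.1, h1⟩
      rw [hy v ⟨hv.1, h1⟩, le_div_iff₀ hGpos, hGint1 v hv,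
        ← intervalIntegral.integral_const_mul]
      apply intervalIntegral.integral_mono_on h1.le
        ((hg_ii v hv 1 h11).const_mul _) (hq_ii v hv 1 h11)
      intro x hx
      have hxI : x ∈ Icc (0:ℝ) 1 := ⟨hv.1.trans hx.1, hx.2⟩
      exact mul_le_mul_of_nonneg_right (hmono_inv hv hxI hx.1) (hg_pos x hxI).le
  have hy_le : ∀ v ∈ Icc (0:ℝ) 1, y v ≤ cbar := by
    intro v hv
    rcases eq_or_lt_of_le hv.2 with h1 | h1
    · rw [h1, hy1]
    · have hGpos := hGlt v ⟨hv.1, h1⟩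
      rw [hy v ⟨hv.1, h1⟩, div_le_iff₀ hGpos, hGint1 v hv,
        ← intervalIntegral.integral_const_mul]
      apply intervalIntegral.integral_mono_on h1.le (hq_ii v hv 1 h11)
        ((hg_ii v hv 1 h11).const_mul _)
      intro x hx
      have hxI : x ∈ Icc (0:ℝ) 1 := ⟨hv.1.trans hx.1, hx.2⟩
      exact mul_le_mul_of_nonneg_right (hinv_mem x hxI).2 (hg_pos x hxI).le
  -- y is monotone
  have hymono : MonotoneOn y (Icc 0 1) := by
    intro a ha b hb hab
    rcases eq_or_lt_of_le hb.2 with h1 | h1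
    · rw [h1, hy1]
      exact hy_le a ha
    · have ha1 : a < 1 := lt_of_le_of_lt hab h1
      have pa := hGlt a ⟨ha.1, ha1⟩
      have pb := hGlt b ⟨hb.1, h1⟩
      rw [hy a ⟨ha.1, ha1⟩, hy b ⟨hb.1, h1⟩, div_le_div_iff₀ pa pb]
      have hsplit : (∫ x in a..1, γinv x * g x)
          = (∫ x in a..b, γinv x * g x) + ∫ x in b..1, γinv x * g x :=
        (intervalIntegral.integral_add_adjacent_intervals (hq_ii a ha b hb)
          (hq_ii b hb 1 h11)).symm
      have hΔ : G b - G a = ∫ s in a..b, g s := hGdiff a ha b hb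
      have hΔnn : (0:ℝ) ≤ G b - G a := sub_nonneg.mpr (hGmono a ha b hb hab)
      have hM : (∫ x in a..b, γinv x * g x) ≤ γinv b * (G b - G a) := by
        rw [hΔ, ← intervalIntegral.integral_const_mul]
        apply intervalIntegral.integral_mono_on hab (hq_ii a ha b hb)
          ((hg_ii a ha b hb).const_mul _)
        intro x hx
        have hxI : x ∈ Icc (0:ℝ) 1 := ⟨ha.1.trans hx.1, hx.2.trans hb.2⟩
        exact mul_le_mul_of_nonneg_right (hmono_inv hxI hb hx.2) (hg_pos x hxI).le
      have hN : γinv b * (1 - G b) ≤ ∫ x in b..1, γinv x * g x := by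
        rw [hGint1 b hb, ← intervalIntegral.integral_const_mul]
        apply intervalIntegral.integral_mono_on h1.le
          ((hg_ii b hb 1 h11).const_mul _) (hq_ii b hb 1 h11)
        intro x hx
        have hxI : x ∈ Icc (0:ℝ) 1 := ⟨hb.1.trans hx.1, hx.2⟩
        exact mul_le_mul_of_nonneg_right (hmono_inv hb hxI hx.1) (hg_pos x hxI).le
      have hb0 : 0 ≤ γinv b := (hinv_mem b hb).1
      rw [hsplit]
      nlinarith [mul_le_mul_of_nonneg_right hM pb.le,
        mul_le_mul_of_nonneg_right hN hΔnn]
  -- evaluation/upper bound for the profit at an arbitrary price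
  have hD_eval : ∀ p c : ℝ, ∃ w ∈ Icc (0:ℝ) 1,
      (∀ v ∈ Icc (0:ℝ) 1, p ≤ y v → w ≤ v) ∧
      D p = 1 - G w ∧
      (p - c) * D p ≤ ∫ x in w..1, (γinv x - c) * g x := by
    intro p c
    by_cases hA : ∃ v ∈ Icc (0:ℝ) 1, p ≤ y v
    · obtain ⟨v0, hv0, hpv0⟩ := hA
      set A : Set ℝ := {v | v ∈ Icc (0:ℝ) 1 ∧ p ≤ y v} with hAdef
      have hAne : A.Nonempty := ⟨v0, hv0, hpv0⟩
      have hAbdd : BddBelow A := ⟨0, fun a haA => haA.1.1⟩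
      set w := sInf A with hwdef
      have hw0 : 0 ≤ w := le_csInf hAne fun a haA => haA.1.1
      have hwv0 : w ≤ v0 := csInf_le hAbdd ⟨hv0, hpv0⟩
      have hwI : w ∈ Icc (0:ℝ) 1 := ⟨hw0, hwv0.trans hv0.2⟩
      have hup : ∀ v, w < v → v ≤ 1 → p ≤ y v := by
        intro v hwv hv1
        obtain ⟨a, haA, hav⟩ := exists_lt_of_csInf_lt hAne hwv
        exact le_trans haA.2 (hymono haA.1 ⟨haA.1.1.trans hav.le, hv1⟩ hav.le)
      have hDp : D p = 1 - G w := by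
        rw [hD]
        have h1 : ∫ v in Icc (0:ℝ) 1, (if p ≤ y v then g v else 0)
            = ∫ v in Icc (0:ℝ) 1, (Icc w 1).indicator g v := by
          apply setIntegral_congr_ae measurableSet_Icc
          have hsing : ∀ᵐ (v:ℝ), v ≠ w := by
            rw [ae_iff]
            simpa [not_not] using Real.volume_singleton (a := w)
          filter_upwards [hsing] with v hvne hvI
          rcases lt_or_gt_of_ne hvne with hlt | hgt
          · have hvA : v ∉ A := fun h => absurd (csInf_le hAbdd h) (not_le.mpr hlt)
            have hnp : ¬ p ≤ y v := fun h => hvA ⟨hvI, h⟩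
            rw [if_neg hnp, indicator_of_notMem]
            exact fun hmem => absurd hmem.1 (not_le.mpr hlt)
          · rw [if_pos (hup v hgt hvI.2), indicator_of_mem (mem_Icc.mpr ⟨hgt.le, hvI.2⟩) g]
        rw [h1, setIntegral_indicator measurableSet_Icc]
        have h2 : Icc (0:ℝ) 1 ∩ Icc w 1 = Icc w 1 := by
          rw [Icc_inter_Icc, max_eq_right hw0, min_self]
        rw [h2, integral_Icc_eq_integral_Ioc, ← intervalIntegral.integral_of_le hwI.2]
        have := hGint1 w hwI
        linarith
      refine ⟨w, hwI, fun v hv hpv => csInf_le hAbdd (mem_setOf.mpr ⟨hv, hpv⟩), hDp, ?_⟩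
      rw [hDp]
      rcases eq_or_lt_of_le hwI.2 with hweq | hwlt
      · rw [hweq, hG1, intervalIntegral.integral_same]
        simp
      · -- limit argument
        have hΦcont : ContinuousOn (fun u => ∫ x in u..1, (γinv x - c) * g x) (Icc 0 1) := by
          have h := intervalIntegral.continuousOn_primitive_interval_left
            (f := fun x => (γinv x - c) * g x) (μ := volume) (a := 0) (b := 1) ?_
          · rwa [uIcc_of_le zero_le_one] at h
          · rw [uIcc_of_le zero_le_one]; exact hqc_int c
        have hGcont : ContinuousOn G (Icc 0 1) := by
          have hGfun : G = fun x => ∫ s in (0:ℝ)..x, g s := funext hG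
          rw [hGfun]
          have h := intervalIntegral.continuousOn_primitive_interval
            (f := g) (μ := volume) (a := 0) (b := 1) ?_
          · rwa [uIcc_of_le zero_le_one] at h
          · rw [uIcc_of_le zero_le_one]; exact hg_int
        haveI hne : (𝓝[Ioo w 1] w).NeBot := by
          apply mem_closure_iff_nhdsWithin_neBot.mp
          rw [closure_Ioo (ne_of_lt hwlt)]
          exact ⟨le_rfl, hwlt.le⟩
        have hIoosub : Ioo w 1 ⊆ Icc (0:ℝ) 1 := fun x hx => ⟨hw0.trans hx.1.le, hx.2.le⟩
        have t1 : Tendsto (fun v => (p - c) * (1 - G v)) (𝓝[Ioo w 1] w)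
            (𝓝 ((p - c) * (1 - G w))) :=
          continuousWithinAt_const.mul
            (continuousWithinAt_const.sub ((hGcont w hwI).mono hIoosub))
        have t2 : Tendsto (fun u => ∫ x in u..1, (γinv x - c) * g x) (𝓝[Ioo w 1] w)
            (𝓝 (∫ x in w..1, (γinv x - c) * g x)) :=
          (hΦcont w hwI).mono hIoosub
        refine le_of_tendsto_of_tendsto t1 t2 ?_
        filter_upwards [self_mem_nhdsWithin] with v hv
        have hvI : v ∈ Icc (0:ℝ) 1 := hIoosub hv
        have hpy : p ≤ y v := hup v hv.1 hv.2.le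
        have hGv : 0 < 1 - G v := hGlt v ⟨hvI.1, hv.2⟩
        calc (p - c) * (1 - G v) ≤ (y v - c) * (1 - G v) := by nlinarith
        _ = ∫ x in v..1, (γinv x - c) * g x := hΦid c v hvI
    · -- no buyer type accepts the price
      push_neg at hA
      have hDp : D p = 0 := by
        rw [hD]
        have heq : EqOn (fun v => if p ≤ y v then g v else 0) (fun _ => (0:ℝ))
            (Icc (0:ℝ) 1) := by
          intro v hv
          have : ¬ p ≤ y v := not_le.mpr (hA v hv)
          simp [this]
        rw [setIntegral_congr_fun measurableSet_Icc heq]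
        simp
      refine ⟨1, h11, ?_, ?_, ?_⟩
      · intro v hv hpv
        exact absurd hpv (not_le.mpr (hA v hv))
      · rw [hDp, hG1]; ring
      · rw [hDp, intervalIntegral.integral_same, mul_zero]
  -- γ maps [0, cbar] into [0, 1], and γinv inverts it there
  have hγ0 : γ 0 = 0 := by
    have hF0 : F 0 = 0 := by rw [hF]; simp
    rw [hγ 0 h01, hF0]
    simp
  have hγmemI : ∀ c ∈ Icc (0:ℝ) cbar, γ c ∈ Icc (0:ℝ) 1 := by
    intro c hc
    have hcI : c ∈ Icc (0:ℝ) 1 := hIsub hc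
    constructor
    · calc (0:ℝ) = γ 0 := hγ0.symm
      _ ≤ γ c := hγ_mono.monotoneOn h01 hcI hc.1
    · calc γ c ≤ γ cbar := hγ_mono.monotoneOn hcI (hIsub ⟨hcbar.1, le_rfl⟩) hc.2
      _ = 1 := hγcbar
  have hinvγ : ∀ c ∈ Icc (0:ℝ) cbar, γinv (γ c) = c := by
    intro c hc
    have h1 := hinv (γ c) (hγmemI c hc)
    have h2 : γinv (γ c) ∈ Icc (0:ℝ) 1 :=
      ⟨(hinv_mem _ (hγmemI c hc)).1, (hinv_mem _ (hγmemI c hc)).2.trans hcb1⟩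
    exact hγ_mono.injOn h2 (hIsub hc) h1
  constructor
  · -- Part 1 : active types
    intro c hc p
    have hγcI := hγmemI c hc
    have hicc : γinv (γ c) = c := hinvγ c hc
    obtain ⟨w, hwI, _, hDw, hble⟩ := hD_eval p c
    -- the virtual surplus is maximized at cutoff γ c
    have hΦmax : (∫ x in w..1, (γinv x - c) * g x)
        ≤ ∫ x in (γ c)..1, (γinv x - c) * g x := by
      rcases le_total w (γ c) with hcase | hcase
      · have hsplit : (∫ x in w..1, (γinv x - c) * g x)
            = (∫ x in w..(γ c), (γinv x - c) * g x) + ∫ x in (γ c)..1, (γinv x - c) * g x :=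
          (intervalIntegral.integral_add_adjacent_intervals (hqc_ii c w hwI (γ c) hγcI)
            (hqc_ii c (γ c) hγcI 1 h11)).symm
        have hnp : (∫ x in w..(γ c), (γinv x - c) * g x) ≤ 0 := by
          have := intervalIntegral.integral_mono_on (μ := volume) hcase
            (hqc_ii c w hwI (γ c) hγcI)
            (intervalIntegrable_const (c := (0:ℝ)))
            (fun x hx => by
              have hxI : x ∈ Icc (0:ℝ) 1 := ⟨hwI.1.trans hx.1, hx.2.trans hγcI.2⟩
              have h1 : γinv x ≤ c := by
                rw [← hicc]; exact hmono_inv hxI hγcI hx.2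
              exact mul_nonpos_of_nonpos_of_nonneg (by linarith) (hg_pos x hxI).le)
          simpa using this
        linarith
      · have hsplit : (∫ x in (γ c)..1, (γinv x - c) * g x)
            = (∫ x in (γ c)..w, (γinv x - c) * g x) + ∫ x in w..1, (γinv x - c) * g x :=
          (intervalIntegral.integral_add_adjacent_intervals (hqc_ii c (γ c) hγcI w hwI)
            (hqc_ii c w hwI 1 h11)).symm
        have hnn : 0 ≤ ∫ x in (γ c)..w, (γinv x - c) * g x := by
          apply intervalIntegral.integral_nonneg hcase
          intro x hx
          have hxI : x ∈ Icc (0:ℝ) 1 := ⟨hγcI.1.trans hx.1, hx.2.trans hwI.2⟩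
          have h1 : c ≤ γinv x := by
            rw [← hicc]; exact hmono_inv hγcI hxI hx.1
          exact mul_nonneg (by linarith) (hg_pos x hxI).le
        linarith
    -- the posted price attains the maximal virtual surplus
    have hstar : (∫ x in (γ c)..1, (γinv x - c) * g x) ≤ (y (γ c) - c) * D (y (γ c)) := by
      obtain ⟨w', hw'I, hw'min, hD', _⟩ := hD_eval (y (γ c)) c
      have hw'le : w' ≤ γ c := hw'min (γ c) hγcI le_rfl
      rw [hD', ← hΦid c (γ c) hγcI]
      have hyc : c ≤ y (γ c) := by
        have h := hy_ge (γ c) hγcI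
        rw [hicc] at h
        exact h
      have hGm : G w' ≤ G (γ c) := hGmono w' hw'I (γ c) hγcI hw'le
      nlinarith
    calc (p - c) * D p ≤ ∫ x in w..1, (γinv x - c) * g x := hble
    _ ≤ ∫ x in (γ c)..1, (γinv x - c) * g x := hΦmax
    _ ≤ (y (γ c) - c) * D (y (γ c)) := hstar
  · -- Part 2 : inactive types
    intro c hccbar
    constructor
    · intro p
      obtain ⟨w, hwI, _, _, hble⟩ := hD_eval p c
      have hnp : (∫ x in w..1, (γinv x - c) * g x) ≤ 0 := by
        have := intervalIntegral.integral_mono_on (μ := volume) hwI.2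
          (hqc_ii c w hwI 1 h11)
          (intervalIntegrable_const (c := (0:ℝ)))
          (fun x hx => by
            have hxI : x ∈ Icc (0:ℝ) 1 := ⟨hwI.1.trans hx.1, hx.2⟩
            have h1 : γinv x ≤ cbar := (hinv_mem x hxI).2
            exact mul_nonpos_of_nonpos_of_nonneg (by linarith) (hg_pos x hxI).le)
        simpa using this
      linarith
    · exact ⟨c, by ring⟩
end

section
/- (Allocation Substitution / Proposition 2.) Let f and g be continuously differentiable strictly positive densities on [0,1] with CDFs F and G. Assume the reversed hazard rate f(c)/F(c) is strictly decreasing on (0,1] and the hazard rate g(v)/(1 − G(v)) is strictly increasing on [0,1). Define γ(c) = c + F(c)/f(c), the virtual valuation r(v) = v − (1 − G(v))/g(v) (which is continuous and strictly increasing with r(0) < 0 and r(1) = 1), and let ψ : [0,1] → [0,1] be defined by r(ψ(c)) = c. Let Δ* = {(c,v) ∈ [0,1]² : v ≥ γ(c)} and Δᵐ = {(c,v) ∈ [0,1]² : v ≥ ψ(c)}. Then for any (c,v) ∈ Δ* \ Δᵐ and (c′,v′) ∈ Δᵐ \ Δ* with (c,v) ≠ (c′,v′), one has c < c′ and v < v′.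 -/
open MeasureTheory Set

/-- **Proposition 2 (Allocation Substitution).** Under a strictly decreasing reversed
hazard rate for the cost distribution and a strictly increasing hazard rate for the value
distribution, any trade gained under the buyer-optimal algorithm relative to monopoly
pricing has strictly lower cost and strictly lower value than any trade lost. -/
theorem stmt_9
    (f g F G γ r ψ : ℝ → ℝ)
    (hf_diff : ContDiffOn ℝ 1 f (Icc 0 1))
    (hf_pos : ∀ x ∈ Icc (0:ℝ) 1, 0 < f x)
    (hf_mass : ∫ x in (0:ℝ)..1, f x = 1)
    (hg_diff : ContDiffOn ℝ 1 g (Icc 0 1))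
    (hg_pos : ∀ x ∈ Icc (0:ℝ) 1, 0 < g x)
    (hg_mass : ∫ x in (0:ℝ)..1, g x = 1)
    (hF : ∀ x, F x = ∫ s in (0:ℝ)..x, f s)
    (hG : ∀ x, G x = ∫ s in (0:ℝ)..x, g s)
    (hrevhaz : StrictAntiOn (fun c => f c / F c) (Ioc 0 1))
    (hhaz : StrictMonoOn (fun v => g v / (1 - G v)) (Ico 0 1))
    (hγ : ∀ c ∈ Icc (0:ℝ) 1, γ c = c + F c / f c)
    (hr : ∀ v ∈ Icc (0:ℝ) 1, r v = v - (1 - G v) / g v)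
    (hψ_mem : ∀ c ∈ Icc (0:ℝ) 1, ψ c ∈ Icc (0:ℝ) 1)
    (hψ : ∀ c ∈ Icc (0:ℝ) 1, r (ψ c) = c) :
    ∀ p ∈ ({x : ℝ × ℝ | x.1 ∈ Icc (0:ℝ) 1 ∧ x.2 ∈ Icc (0:ℝ) 1 ∧ γ x.1 ≤ x.2} \
            {x : ℝ × ℝ | x.1 ∈ Icc (0:ℝ) 1 ∧ x.2 ∈ Icc (0:ℝ) 1 ∧ ψ x.1 ≤ x.2}),
    ∀ p' ∈ ({x : ℝ × ℝ | x.1 ∈ Icc (0:ℝ) 1 ∧ x.2 ∈ Icc (0:ℝ) 1 ∧ ψ x.1 ≤ x.2} \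
            {x : ℝ × ℝ | x.1 ∈ Icc (0:ℝ) 1 ∧ x.2 ∈ Icc (0:ℝ) 1 ∧ γ x.1 ≤ x.2}),
      p ≠ p' → p.1 < p'.1 ∧ p.2 < p'.2 := by
  have hfc : ContinuousOn f (Icc 0 1) := hf_diff.continuousOn
  have hgc : ContinuousOn g (Icc 0 1) := hg_diff.continuousOn
  -- F is positive on (0,1]
  have hFpos : ∀ c ∈ Ioc (0:ℝ) 1, 0 < F c := by
    intro c hc
    rw [hF]
    apply intervalIntegral.intervalIntegral_pos_of_pos_on
    · apply ContinuousOn.intervalIntegrable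
      rw [uIcc_of_le hc.1.le]
      exact hfc.mono (Icc_subset_Icc le_rfl hc.2)
    · intro x hx
      exact hf_pos x ⟨hx.1.le, hx.2.le.trans hc.2⟩
    · exact hc.1
  have hF0 : F 0 = 0 := by rw [hF]; simp
  have hG1 : G 1 = 1 := by rw [hG]; exact hg_mass
  -- 1 - G v > 0 on [0,1)
  have hGsub : ∀ v ∈ Ico (0:ℝ) 1, 0 < 1 - G v := by
    intro v hv
    have hint1 : IntervalIntegrable g volume 0 v := by
      apply ContinuousOn.intervalIntegrable
      rw [uIcc_of_le hv.1]
      exact hgc.mono (Icc_subset_Icc le_rfl hv.2.le)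
    have hint2 : IntervalIntegrable g volume v 1 := by
      apply ContinuousOn.intervalIntegrable
      rw [uIcc_of_le hv.2.le]
      exact hgc.mono (Icc_subset_Icc hv.1 le_rfl)
    have hsplit := intervalIntegral.integral_add_adjacent_intervals hint1 hint2
    have hpos : 0 < ∫ s in v..1, g s := by
      apply intervalIntegral.intervalIntegral_pos_of_pos_on hint2
      · intro x hx
        exact hg_pos x ⟨hv.1.trans hx.1.le, hx.2.le⟩
      · exact hv.2
    have := hG v
    rw [hG v]
    rw [hg_mass] at hsplit
    linarith
  -- H := inverse hazard rate, strictly decreasing on [0,1]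
  set H : ℝ → ℝ := fun v => (1 - G v) / g v with hH
  have hHpos : ∀ v ∈ Ico (0:ℝ) 1, 0 < H v := fun v hv =>
    div_pos (hGsub v hv) (hg_pos v ⟨hv.1, hv.2.le⟩)
  have hH1 : H 1 = 0 := by simp [hH, hG1]
  have hHanti : StrictAntiOn H (Icc 0 1) := by
    intro a ha b hb hab
    rcases eq_or_lt_of_le hb.2 with hb1 | hb1
    · rw [hb1, hH1]
      exact hHpos a ⟨ha.1, hab.trans_le hb.2⟩
    · have ha' : a ∈ Ico (0:ℝ) 1 := ⟨ha.1, hab.trans hb1⟩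
      have hb' : b ∈ Ico (0:ℝ) 1 := ⟨hb.1, hb1⟩
      have hkey := hhaz ha' hb' hab
      simp only at hkey
      have h1 : 0 < 1 - G a := hGsub a ha'
      have h2 : 0 < 1 - G b := hGsub b hb'
      have h3 : 0 < g a := hg_pos a ⟨ha.1, ha.2⟩
      have h4 : 0 < g b := hg_pos b ⟨hb.1, hb.2⟩
      rw [div_lt_div_iff₀ h1 h2] at hkey
      show (1 - G b) / g b < (1 - G a) / g a
      rw [div_lt_div_iff₀ h4 h3]
      nlinarith
  -- r is strictly monotone on [0,1]
  have hrmono : StrictMonoOn r (Icc 0 1) := by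
    intro a ha b hb hab
    rw [hr a ha, hr b hb]
    have := hHanti ha hb hab
    simp only [hH] at this
    linarith
  -- R := F/f, strictly monotone on [0,1]
  set R : ℝ → ℝ := fun c => F c / f c with hR
  have hRmono : StrictMonoOn R (Icc 0 1) := by
    intro a ha b hb hab
    have hb' : b ∈ Ioc (0:ℝ) 1 := ⟨lt_of_le_of_lt ha.1 hab, hb.2⟩
    rcases eq_or_lt_of_le ha.1 with ha0 | ha0
    · show F a / f a < F b / f b
      rw [← ha0, hF0]
      simp only [zero_div]
      exact div_pos (hFpos b hb') (hg_pos b hb |> fun _ => hf_pos b hb)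
    · have ha' : a ∈ Ioc (0:ℝ) 1 := ⟨ha0, ha.2⟩
      have hkey := hrevhaz ha' hb' hab
      simp only at hkey
      have h1 : 0 < F a := hFpos a ha'
      have h2 : 0 < F b := hFpos b hb'
      have h3 : 0 < f a := hf_pos a ha
      have h4 : 0 < f b := hf_pos b hb
      rw [div_lt_div_iff₀ h2 h1] at hkey
      show F a / f a < F b / f b
      rw [div_lt_div_iff₀ h3 h4]
      nlinarith
  -- key identity: ψ c = c + H (ψ c)
  have hid : ∀ c ∈ Icc (0:ℝ) 1, ψ c = c + H (ψ c) := by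
    intro c hc
    have h1 := hψ c hc
    have h2 := hr (ψ c) (hψ_mem c hc)
    rw [h2] at h1
    simp only [hH]
    linarith
  -- main argument
  rintro ⟨c, v⟩ ⟨⟨hc, hv, hγc⟩, hnot⟩ ⟨c', v'⟩ ⟨⟨hc', hv', hψc'⟩, hnot'⟩ _
  simp only [mem_setOf_eq, mem_diff, not_and, not_le] at hnot hnot'
  have hvlt : v < ψ c := hnot hc hv
  have hv'lt : v' < γ c' := hnot' hc' hv'
  -- gained trade: R c < H (ψ c)
  have hA : R c < H (ψ c) := by
    have h1 := hγ c hc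
    have h2 := hid c hc
    simp only [hR]
    linarith
  -- lost trade: H (ψ c') < R c'
  have hB : H (ψ c') < R c' := by
    have h1 := hγ c' hc'
    have h2 := hid c' hc'
    simp only [hR]
    linarith
  have hcc' : c < c' := by
    by_contra hle
    push_neg at hle
    have hψle : ψ c' ≤ ψ c := by
      by_contra h
      push_neg at h
      have := hrmono (hψ_mem c hc) (hψ_mem c' hc') h
      rw [hψ c hc, hψ c' hc'] at this
      linarith
    have hHle : H (ψ c) ≤ H (ψ c') := by
      rcases eq_or_lt_of_le hψle with heq | hlt
      · rw [heq]
      · exact (hHanti (hψ_mem c' hc') (hψ_mem c hc) hlt).le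
    have hRle : R c' ≤ R c := by
      rcases eq_or_lt_of_le hle with heq | hlt
      · rw [heq]
      · exact (hRmono hc' hc hlt).le
    linarith
  have hψlt : ψ c < ψ c' := by
    by_contra h
    push_neg at h
    rcases eq_or_lt_of_le h with heq | hlt
    · have h1 := hψ c hc
      have h2 := hψ c' hc'
      rw [heq] at h2
      linarith
    · have := hrmono (hψ_mem c' hc') (hψ_mem c hc) hlt
      rw [hψ c hc, hψ c' hc'] at this
      linarith
  exact ⟨hcc', by simp only; linarith⟩
end

section
/- Let f and g be continuously differentiable strictly positive densities on [0,1] with CDFs F and G. Assume f(c)/F(c) is strictly decreasing on (0,1] and g(v)/(1 − G(v)) is strictly increasing on [0,1). Define γ(c) = c + F(c)/f(c), r(v) = v − (1 − G(v))/g(v), and ψ : [0,1] → [0,1] by r(ψ(c)) = c. Then there exists a unique c* ∈ (0,1) such that γ(c*) = ψ(c*), and γ(c) < ψ(c) for all c ∈ [0, c*) while γ(c) > ψ(c) for all c ∈ (c*, 1]. -/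
open MeasureTheory Set intervalIntegral

/-- **Single crossing of the virtual cost and the inverse virtual valuation.** Under a
strictly decreasing reversed hazard rate of `F` and a strictly increasing hazard rate of
`G`, the curves `γ` and `ψ = r⁻¹` cross exactly once in `(0,1)`, with `γ < ψ` before the
crossing and `γ > ψ` after it. -/
theorem stmt_10
    (f g F G γ r ψ : ℝ → ℝ)
    (hf_diff : ContDiffOn ℝ 1 f (Icc 0 1))
    (hf_pos : ∀ x ∈ Icc (0:ℝ) 1, 0 < f x)
    (hf_mass : ∫ x in (0:ℝ)..1, f x = 1)
    (hg_diff : ContDiffOn ℝ 1 g (Icc 0 1))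
    (hg_pos : ∀ x ∈ Icc (0:ℝ) 1, 0 < g x)
    (hg_mass : ∫ x in (0:ℝ)..1, g x = 1)
    (hF : ∀ x, F x = ∫ s in (0:ℝ)..x, f s)
    (hG : ∀ x, G x = ∫ s in (0:ℝ)..x, g s)
    (hrevhaz : StrictAntiOn (fun c => f c / F c) (Ioc 0 1))
    (hhaz : StrictMonoOn (fun v => g v / (1 - G v)) (Ico 0 1))
    (hγ : ∀ c ∈ Icc (0:ℝ) 1, γ c = c + F c / f c)
    (hr : ∀ v ∈ Icc (0:ℝ) 1, r v = v - (1 - G v) / g v)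
    (hψ_mem : ∀ c ∈ Icc (0:ℝ) 1, ψ c ∈ Icc (0:ℝ) 1)
    (hψ : ∀ c ∈ Icc (0:ℝ) 1, r (ψ c) = c) :
    (∃! cstar, cstar ∈ Ioo (0:ℝ) 1 ∧ γ cstar = ψ cstar) ∧
    (∀ cstar, cstar ∈ Ioo (0:ℝ) 1 → γ cstar = ψ cstar →
      (∀ c ∈ Ico (0:ℝ) cstar, γ c < ψ c) ∧ (∀ c ∈ Ioc cstar 1, ψ c < γ c)) := by
  have hfc : ContinuousOn f (Icc 0 1) := hf_diff.continuousOn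
  have hgc : ContinuousOn g (Icc 0 1) := hg_diff.continuousOn
  have hF0 : F 0 = 0 := by rw [hF]; simp
  have hF1 : F 1 = 1 := by rw [hF]; exact hf_mass
  have hG1 : G 1 = 1 := by rw [hG]; exact hg_mass
  have hfint : ∀ a b : ℝ, a ∈ Icc (0:ℝ) 1 → b ∈ Icc (0:ℝ) 1 →
      IntervalIntegrable f volume a b := fun a b ha hb =>
    (hfc.mono (uIcc_subset_Icc ha hb)).intervalIntegrable
  have hgint : ∀ a b : ℝ, a ∈ Icc (0:ℝ) 1 → b ∈ Icc (0:ℝ) 1 →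
      IntervalIntegrable g volume a b := fun a b ha hb =>
    (hgc.mono (uIcc_subset_Icc ha hb)).intervalIntegrable
  -- F positive on (0,1]
  have hFpos : ∀ c ∈ Ioc (0:ℝ) 1, 0 < F c := by
    intro c hc
    rw [hF]
    refine intervalIntegral_pos_of_pos_on (hfint 0 c ⟨le_rfl, zero_le_one⟩ ⟨hc.1.le, hc.2⟩)
      (fun x hx => hf_pos x ⟨hx.1.le, hx.2.le.trans hc.2⟩) hc.1
  -- G < 1 on [0,1)
  have hGlt : ∀ v ∈ Ico (0:ℝ) 1, G v < 1 := by
    intro v hv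
    have hsplit : G v + ∫ s in v..1, g s = 1 := by
      have hadd := intervalIntegral.integral_add_adjacent_intervals
        (hgint 0 v ⟨le_rfl, zero_le_one⟩ ⟨hv.1, hv.2.le⟩)
        (hgint v 1 ⟨hv.1, hv.2.le⟩ ⟨zero_le_one, le_rfl⟩)
      rw [hg_mass] at hadd
      rw [hG]
      exact hadd
    have hpos : 0 < ∫ s in v..1, g s :=
      intervalIntegral_pos_of_pos_on (hgint v 1 ⟨hv.1, hv.2.le⟩ ⟨zero_le_one, le_rfl⟩)
        (fun x hx => hg_pos x ⟨hv.1.trans hx.1.le, hx.2.le⟩) hv.2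
    linarith
  -- F/f strictly increasing on [0,1]
  have hFf : ∀ c ∈ Icc (0:ℝ) 1, ∀ c' ∈ Icc (0:ℝ) 1, c < c' → F c / f c < F c' / f c' := by
    intro c hc c' hc' hlt
    have hc'Ioc : c' ∈ Ioc (0:ℝ) 1 := ⟨lt_of_le_of_lt hc.1 hlt, hc'.2⟩
    have hFc' := hFpos c' hc'Ioc
    have hfc' := hf_pos c' hc'
    rcases eq_or_lt_of_le hc.1 with h0 | h0
    · rw [← h0, hF0, zero_div]
      exact div_pos hFc' hfc'
    · have hcIoc : c ∈ Ioc (0:ℝ) 1 := ⟨h0, hc.2⟩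
      have := hrevhaz hcIoc hc'Ioc hlt
      have hFc := hFpos c hcIoc
      have hfcp := hf_pos c hc
      simp only at this
      rw [div_lt_div_iff₀ hFc' hFc] at this
      rw [div_lt_div_iff₀ hfcp hfc']
      nlinarith
  -- (1-G)/g strictly decreasing on [0,1]
  have hGg : ∀ v ∈ Icc (0:ℝ) 1, ∀ v' ∈ Icc (0:ℝ) 1, v < v' →
      (1 - G v') / g v' < (1 - G v) / g v := by
    intro v hv v' hv' hlt
    have hvIco : v ∈ Ico (0:ℝ) 1 := ⟨hv.1, lt_of_lt_of_le hlt hv'.2⟩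
    have hGv := hGlt v hvIco
    have hgv := hg_pos v hv
    rcases eq_or_lt_of_le hv'.2 with h1 | h1
    · rw [h1, hG1, sub_self, zero_div]
      exact div_pos (by linarith) hgv
    · have hv'Ico : v' ∈ Ico (0:ℝ) 1 := ⟨hv'.1, h1⟩
      have := hhaz hvIco hv'Ico hlt
      have hGv' := hGlt v' hv'Ico
      have hgv' := hg_pos v' hv'
      simp only at this
      rw [div_lt_div_iff₀ (by linarith : (0:ℝ) < 1 - G v) (by linarith : (0:ℝ) < 1 - G v')] at this
      rw [div_lt_div_iff₀ hgv' hgv]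
      nlinarith
  -- γ expands, r expands
  have hγexp : ∀ c ∈ Icc (0:ℝ) 1, ∀ c' ∈ Icc (0:ℝ) 1, c < c' → c' - c < γ c' - γ c := by
    intro c hc c' hc' hlt
    rw [hγ c hc, hγ c' hc']
    have := hFf c hc c' hc' hlt
    linarith
  have hrexp : ∀ v ∈ Icc (0:ℝ) 1, ∀ v' ∈ Icc (0:ℝ) 1, v < v' → v' - v < r v' - r v := by
    intro v hv v' hv' hlt
    rw [hr v hv, hr v' hv']
    have := hGg v hv v' hv' hlt
    linarith
  have hrmono : ∀ v ∈ Icc (0:ℝ) 1, ∀ v' ∈ Icc (0:ℝ) 1, v < v' → r v < r v' := by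
    intro v hv v' hv' hlt
    have := hrexp v hv v' hv' hlt
    linarith
  -- ψ strictly increasing and contracting
  have hψmono : ∀ c ∈ Icc (0:ℝ) 1, ∀ c' ∈ Icc (0:ℝ) 1, c < c' → ψ c < ψ c' := by
    intro c hc c' hc' hlt
    rcases lt_trichotomy (ψ c) (ψ c') with h | h | h
    · exact h
    · exfalso; rw [← hψ c hc, ← hψ c' hc', h] at hlt; exact lt_irrefl _ hlt
    · exfalso
      have := hrmono (ψ c') (hψ_mem c' hc') (ψ c) (hψ_mem c hc) h
      rw [hψ c hc, hψ c' hc'] at this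
      linarith
  have hψcontr : ∀ c ∈ Icc (0:ℝ) 1, ∀ c' ∈ Icc (0:ℝ) 1, c < c' → ψ c' - ψ c < c' - c := by
    intro c hc c' hc' hlt
    have h1 := hψmono c hc c' hc' hlt
    have h2 := hrexp (ψ c) (hψ_mem c hc) (ψ c') (hψ_mem c' hc') h1
    rw [hψ c hc, hψ c' hc'] at h2
    linarith
  -- h = γ - ψ strictly increasing
  have hmono : ∀ c ∈ Icc (0:ℝ) 1, ∀ c' ∈ Icc (0:ℝ) 1, c < c' →
      γ c - ψ c < γ c' - ψ c' := by
    intro c hc c' hc' hlt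
    have h1 := hγexp c hc c' hc' hlt
    have h2 := hψcontr c hc c' hc' hlt
    linarith
  -- endpoint values
  have h01 : (0:ℝ) ∈ Icc (0:ℝ) 1 := ⟨le_rfl, zero_le_one⟩
  have h11 : (1:ℝ) ∈ Icc (0:ℝ) 1 := ⟨zero_le_one, le_rfl⟩
  have hG0 : G 0 = 0 := by rw [hG]; simp
  have hψ0pos : 0 < ψ 0 := by
    rcases eq_or_lt_of_le (hψ_mem 0 h01).1 with h | h
    · exfalso
      have h0 := hψ 0 h01
      rw [← h, hr 0 h01, hG0] at h0
      have hg0 := hg_pos 0 h01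
      have : 0 < (1 - 0) / g 0 := div_pos (by norm_num) hg0
      linarith
    · exact h
  have hψ1 : ψ 1 = 1 := by
    rcases eq_or_lt_of_le (hψ_mem 1 h11).2 with h | h
    · exact h
    · exfalso
      have h1 := hψ 1 h11
      have hmem := hψ_mem 1 h11
      rw [hr (ψ 1) hmem] at h1
      have hG := hGlt (ψ 1) ⟨hmem.1, h⟩
      have hg := hg_pos (ψ 1) hmem
      have : 0 < (1 - G (ψ 1)) / g (ψ 1) := div_pos (by linarith) hg
      linarith
  -- endpoint signs of γ - ψ
  have hval0 : γ 0 - ψ 0 < 0 := by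
    rw [hγ 0 h01, hF0]
    have := hf_pos 0 h01
    rw [zero_div]
    linarith
  have hval1 : 0 < γ 1 - ψ 1 := by
    rw [hγ 1 h11, hF1, hψ1]
    have hf1 := hf_pos 1 h11
    have : 0 < 1 / f 1 := by positivity
    linarith
  -- continuity of γ on [0,1]
  have hFcont : ContinuousOn F (Icc 0 1) := by
    have : F = fun x => ∫ s in (0:ℝ)..x, f s := funext hF
    rw [this, ← uIcc_of_le (zero_le_one : (0:ℝ) ≤ 1)]
    exact intervalIntegral.continuousOn_primitive_interval
      (by rw [uIcc_of_le (zero_le_one : (0:ℝ) ≤ 1)]; exact hfc.integrableOn_Icc)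
  have hγcont : ContinuousOn γ (Icc 0 1) := by
    refine ContinuousOn.congr ?_ hγ
    exact (continuousOn_id.add (hFcont.div hfc (fun x hx => (hf_pos x hx).ne')))
  -- ψ is 1-Lipschitz on [0,1]
  have hψcont : ContinuousOn ψ (Icc 0 1) := by
    refine LipschitzOnWith.continuousOn (K := 1) (LipschitzOnWith.of_dist_le_mul ?_)
    intro x hx y hy
    rw [Real.dist_eq, Real.dist_eq, NNReal.coe_one, one_mul]
    rcases lt_trichotomy x y with h | h | h
    · have h1 := hψmono x hx y hy h
      have h2 := hψcontr x hx y hy h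
      rw [abs_sub_comm, abs_of_pos (by linarith), abs_sub_comm, abs_of_pos (by linarith)]
      linarith
    · simp [h]
    · have h1 := hψmono y hy x hx h
      have h2 := hψcontr y hy x hx h
      rw [abs_of_pos (by linarith), abs_of_pos (by linarith)]
      linarith
  have hcont : ContinuousOn (fun c => γ c - ψ c) (Icc 0 1) := hγcont.sub hψcont
  -- existence via IVT
  have hIVT := intermediate_value_Ioo (zero_le_one : (0:ℝ) ≤ 1) hcont
  have h0mem : (0:ℝ) ∈ Ioo (γ 0 - ψ 0) (γ 1 - ψ 1) := ⟨hval0, hval1⟩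
  obtain ⟨cstar, hcs, heq0⟩ := hIVT h0mem
  have hcsIcc : cstar ∈ Icc (0:ℝ) 1 := ⟨hcs.1.le, hcs.2.le⟩
  have heq : γ cstar = ψ cstar := by
    have : γ cstar - ψ cstar = 0 := heq0
    linarith
  constructor
  · refine ⟨cstar, ⟨hcs, heq⟩, ?_⟩
    rintro c ⟨hcIoo, hceq⟩
    have hcIcc : c ∈ Icc (0:ℝ) 1 := ⟨hcIoo.1.le, hcIoo.2.le⟩
    by_contra hne
    rcases lt_or_gt_of_ne hne with h | h
    · have := hmono c hcIcc cstar hcsIcc h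
      rw [hceq, heq] at this
      simp at this
    · have := hmono cstar hcsIcc c hcIcc h
      rw [hceq, heq] at this
      simp at this
  · rintro c0 hc0 hc0eq
    have hc0Icc : c0 ∈ Icc (0:ℝ) 1 := ⟨hc0.1.le, hc0.2.le⟩
    constructor
    · rintro c ⟨hc1, hc2⟩
      have hcIcc : c ∈ Icc (0:ℝ) 1 := ⟨hc1, hc2.le.trans hc0Icc.2⟩
      have := hmono c hcIcc c0 hc0Icc hc2
      rw [hc0eq] at this
      linarith
    · rintro c ⟨hc1, hc2⟩
      have hcIcc : c ∈ Icc (0:ℝ) 1 := ⟨hc0Icc.1.trans hc1.le, hc2⟩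
      have := hmono c0 hc0Icc c hcIcc hc1
      rw [hc0eq] at this
      linarith
end

section
/- (Full surplus extraction with known cost, Claim 1 core.) Let g be a continuous strictly positive density on [0,1] and fix a cost c ∈ [0,1]. For every measurable r : [0,1] → [0,1] and every price p ∈ ℝ such that the seller's profit is nonnegative, i.e. (p − c)·∫_0^1 r(v) g(v) dv ≥ 0, the buyer's surplus satisfies ∫_0^1 (v − p) r(v) g(v) dv ≤ ∫_c^1 (v − c) g(v) dv. Moreover, equality holds for r(v) = 1{v ≥ c} and p = c. -/
open MeasureTheory Set

/-- **Claim 1 core (Full surplus extraction with known cost).** With a commonly known cost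
`c`, under any recommendation rule `r` and price `p` giving the seller a nonnegative
profit, the buyer's surplus is at most the full surplus `∫_c^1 (v − c) g(v) dv`; equality
holds for the rule `1{v ≥ c}` at price `p = c`. -/
theorem stmt_16
    (g : ℝ → ℝ) (c : ℝ) (hc : c ∈ Icc (0:ℝ) 1)
    (hg_cont : ContinuousOn g (Icc 0 1))
    (hg_pos : ∀ x ∈ Icc (0:ℝ) 1, 0 < g x)
    (hg_mass : ∫ x in (0:ℝ)..1, g x = 1) :
    (∀ r : ℝ → ℝ, Measurable r → (∀ v ∈ Icc (0:ℝ) 1, r v ∈ Icc (0:ℝ) 1) →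
      ∀ p : ℝ, 0 ≤ (p - c) * ∫ v in (0:ℝ)..1, r v * g v →
        (∫ v in (0:ℝ)..1, (v - p) * r v * g v) ≤ ∫ v in c..1, (v - c) * g v) ∧
    (∫ v in (0:ℝ)..1, (v - c) * (if c ≤ v then (1:ℝ) else 0) * g v) =
      ∫ v in c..1, (v - c) * g v := by
  obtain ⟨hc0, hc1⟩ := hc
  have h01 : (0:ℝ) ≤ 1 := by norm_num
  -- continuity of (v-c)*g v and max (v-c) 0 * g v on [0,1]
  have hGcont : ContinuousOn (fun v => (v - c) * g v) (Icc (0:ℝ) 1) :=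
    ((continuousOn_id.sub continuousOn_const).mul hg_cont)
  have hPhicont : ContinuousOn (fun v => max (v - c) 0 * g v) (Icc (0:ℝ) 1) :=
    (((continuous_id.sub continuous_const).max continuous_const).continuousOn.mul hg_cont)
  have hGI : IntervalIntegrable (fun v => (v - c) * g v) volume 0 1 := by
    apply ContinuousOn.intervalIntegrable
    rwa [uIcc_of_le h01]
  have hgI : IntervalIntegrable g volume 0 1 := by
    apply ContinuousOn.intervalIntegrable
    rwa [uIcc_of_le h01]
  have hPhiI : IntervalIntegrable (fun v => max (v - c) 0 * g v) volume 0 1 := by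
    apply ContinuousOn.intervalIntegrable
    rwa [uIcc_of_le h01]
  -- key integrability lemma
  have key : ∀ h : ℝ → ℝ, IntervalIntegrable h volume 0 1 →
      ∀ r : ℝ → ℝ, Measurable r → (∀ v ∈ Icc (0:ℝ) 1, r v ∈ Icc (0:ℝ) 1) →
      IntervalIntegrable (fun v => r v * h v) volume 0 1 := by
    intro h hh r hr hrb
    rw [intervalIntegrable_iff_integrableOn_Ioc_of_le h01] at hh ⊢
    refine hh.abs.mono' (hr.aestronglyMeasurable.restrict.mul hh.aestronglyMeasurable) ?_
    filter_upwards [ae_restrict_mem measurableSet_Ioc] with v hv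
    have hv' : v ∈ Icc (0:ℝ) 1 := Ioc_subset_Icc_self hv
    have h1 : |r v| ≤ 1 := abs_le.mpr ⟨by linarith [(hrb v hv').1], (hrb v hv').2⟩
    calc ‖r v * h v‖ = |r v| * |h v| := by simp [abs_mul]
      _ ≤ 1 * |h v| := mul_le_mul_of_nonneg_right h1 (abs_nonneg _)
      _ = |h v| := one_mul _
  -- splitting lemma: for f interval integrable on [0,1], vanishing on [0,c]
  -- and equal to (v-c)*g on [c,1], ∫_0^1 f = ∫_c^1 (v-c) g
  have huIcc0c : uIcc (0:ℝ) c ⊆ uIcc (0:ℝ) 1 := by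
    rw [uIcc_of_le hc0, uIcc_of_le h01]; exact Icc_subset_Icc le_rfl hc1
  have huIccc1 : uIcc c (1:ℝ) ⊆ uIcc (0:ℝ) 1 := by
    rw [uIcc_of_le hc1, uIcc_of_le h01]; exact Icc_subset_Icc hc0 le_rfl
  have split : ∀ f : ℝ → ℝ, IntervalIntegrable f volume 0 1 →
      (∀ v ∈ Icc (0:ℝ) c, f v = 0) → (∀ v ∈ Icc c (1:ℝ), f v = (v - c) * g v) →
      (∫ v in (0:ℝ)..1, f v) = ∫ v in c..1, (v - c) * g v := by
    intro f hf h0 h1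
    have hadj : (∫ v in (0:ℝ)..c, f v) + (∫ v in c..(1:ℝ), f v) = ∫ v in (0:ℝ)..1, f v :=
      intervalIntegral.integral_add_adjacent_intervals (hf.mono_set huIcc0c)
        (hf.mono_set huIccc1)
    have e0 : (∫ v in (0:ℝ)..c, f v) = ∫ v in (0:ℝ)..c, (0:ℝ) := by
      apply intervalIntegral.integral_congr
      intro v hv
      rw [uIcc_of_le hc0] at hv
      exact h0 v hv
    have e1 : (∫ v in c..(1:ℝ), f v) = ∫ v in c..(1:ℝ), (v - c) * g v := by
      apply intervalIntegral.integral_congr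
      intro v hv
      rw [uIcc_of_le hc1] at hv
      exact h1 v hv
    simp only [intervalIntegral.integral_zero] at e0
    rw [← hadj, e0, e1, zero_add]
  constructor
  · -- the inequality
    intro r hr hrb p hp
    have hrgI : IntervalIntegrable (fun v => r v * g v) volume 0 1 := key g hgI r hr hrb
    have hrGI : IntervalIntegrable (fun v => r v * ((v - c) * g v)) volume 0 1 :=
      key _ hGI r hr hrb
    have e1 : (fun v => (v - p) * r v * g v)
        = fun v => r v * ((v - c) * g v) - (p - c) * (r v * g v) := by
      funext v; ring
    rw [e1, intervalIntegral.integral_sub hrGI (hrgI.const_mul _),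
      intervalIntegral.integral_const_mul]
    have h2 : (∫ v in (0:ℝ)..1, r v * ((v - c) * g v))
        ≤ ∫ v in (0:ℝ)..1, max (v - c) 0 * g v := by
      apply intervalIntegral.integral_mono_on h01 hrGI hPhiI
      intro v hv
      have hg := hg_pos v hv
      have hr0 := (hrb v hv).1
      have hr1 := (hrb v hv).2
      rcases le_or_gt c v with h | h
      · rw [max_eq_left (by linarith : (0:ℝ) ≤ v - c)]
        have := mul_le_mul_of_nonneg_right hr1 (mul_nonneg (by linarith : (0:ℝ) ≤ v - c) hg.le)
        linarith
      · rw [max_eq_right (by linarith : v - c ≤ (0:ℝ)), zero_mul]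
        exact mul_nonpos_of_nonneg_of_nonpos hr0
          (mul_nonpos_of_nonpos_of_nonneg (by linarith) hg.le)
    have h3 : (∫ v in (0:ℝ)..1, max (v - c) 0 * g v) = ∫ v in c..1, (v - c) * g v := by
      apply split _ hPhiI
      · intro v hv
        rw [max_eq_right (by linarith [hv.2] : v - c ≤ (0:ℝ)), zero_mul]
      · intro v hv
        rw [max_eq_left (by linarith [hv.1] : (0:ℝ) ≤ v - c)]
    linarith
  · -- equality for the indicator rule at price c
    have hind : Measurable fun v : ℝ => if c ≤ v then (1:ℝ) else 0 :=
      Measurable.ite measurableSet_Ici measurable_const measurable_const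
    have hindb : ∀ v ∈ Icc (0:ℝ) 1, (if c ≤ v then (1:ℝ) else 0) ∈ Icc (0:ℝ) 1 := by
      intro v _; split_ifs <;> norm_num
    have hfI : IntervalIntegrable (fun v => (v - c) * (if c ≤ v then (1:ℝ) else 0) * g v)
        volume 0 1 := by
      have := key _ hGI _ hind hindb
      have e : (fun v => (if c ≤ v then (1:ℝ) else 0) * ((v - c) * g v))
          = fun v => (v - c) * (if c ≤ v then (1:ℝ) else 0) * g v := by
        funext v; ring
      rwa [e] at this
    apply split _ hfI
    · intro v hv
      rcases lt_or_eq_of_le hv.2 with h | h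
      · rw [if_neg (not_le.mpr h)]; ring
      · rw [h]; ring
    · intro v hv
      rw [if_pos hv.1]; ring
end

section
/- (Known Product, Unknown Cost / Proposition 6 core inequality.) Let f and g be continuous strictly positive densities on [0,1] with CDFs F and G, let γ(c) = c + F(c)/f(c) be continuous and strictly increasing, let c̄ solve γ(c̄) = 1, and set μ = ∫_0^1 v g(v) dv. For c ∈ [0, c̄), define q(c) = 1 − G(γ(c)) > 0, t*(c) = c·q(c) + ∫_c^{c̄} (1 − G(γ(x))) dx, and p*(c) = t*(c)/q(c). If ∫_0^{γ(c)} (v − c) g(v) dv ≤ 0, then ∫_{γ(c)}^1 v g(v) dv − t*(c) ≥ μ − p*(c); that is, the buyer's payoff from following the recommendations weakly exceeds the payoff from always buying at the posted price. -/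
open MeasureTheory Set

/-- **Proposition 6 core inequality (Known Product, Unknown Cost).** If
`∫_0^{γ(c)} (v − c) g(v) dv ≤ 0`, then the buyer's payoff from following the
recommendations at type `c` weakly exceeds the payoff from always buying at the
posted price `p*(c) = t*(c)/q(c)`. -/
theorem stmt_17
    (f g F G γ : ℝ → ℝ) (cbar μ : ℝ)
    (hf_cont : ContinuousOn f (Icc 0 1))
    (hf_pos : ∀ x ∈ Icc (0:ℝ) 1, 0 < f x)
    (hf_mass : ∫ x in (0:ℝ)..1, f x = 1)
    (hg_cont : ContinuousOn g (Icc 0 1))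
    (hg_pos : ∀ x ∈ Icc (0:ℝ) 1, 0 < g x)
    (hg_mass : ∫ x in (0:ℝ)..1, g x = 1)
    (hF : ∀ x, F x = ∫ s in (0:ℝ)..x, f s)
    (hG : ∀ x, G x = ∫ s in (0:ℝ)..x, g s)
    (hγ : ∀ c ∈ Icc (0:ℝ) 1, γ c = c + F c / f c)
    (hγ_cont : ContinuousOn γ (Icc 0 1))
    (hγ_mono : StrictMonoOn γ (Icc 0 1))
    (hcbar : cbar ∈ Icc (0:ℝ) 1) (hγcbar : γ cbar = 1)
    (hμ : μ = ∫ v in (0:ℝ)..1, v * g v)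
    (q tstar pstar : ℝ → ℝ)
    (hq : ∀ c ∈ Ico (0:ℝ) cbar, q c = 1 - G (γ c))
    (htstar : ∀ c ∈ Ico (0:ℝ) cbar,
      tstar c = c * q c + ∫ x in c..cbar, (1 - G (γ x)))
    (hpstar : ∀ c ∈ Ico (0:ℝ) cbar, pstar c = tstar c / q c) :
    ∀ c ∈ Ico (0:ℝ) cbar,
      0 < q c ∧
      ((∫ v in (0:ℝ)..(γ c), (v - c) * g v) ≤ 0 →
        μ - pstar c ≤ (∫ v in (γ c)..1, v * g v) - tstar c) := by
  -- integrability helpers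
  have hgint : ∀ a b : ℝ, a ∈ Icc (0:ℝ) 1 → b ∈ Icc (0:ℝ) 1 →
      IntervalIntegrable g volume a b := by
    intro a b ha hb
    exact (hg_cont.mono (uIcc_subset_Icc ha hb)).intervalIntegrable
  have hvgint : ∀ a b : ℝ, a ∈ Icc (0:ℝ) 1 → b ∈ Icc (0:ℝ) 1 →
      IntervalIntegrable (fun v => v * g v) volume a b := by
    intro a b ha hb
    exact ((continuousOn_id.mul hg_cont).mono (uIcc_subset_Icc ha hb)).intervalIntegrable
  have hmem0 : (0:ℝ) ∈ Icc (0:ℝ) 1 := by norm_num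
  have hmem1 : (1:ℝ) ∈ Icc (0:ℝ) 1 := by norm_num
  -- 1 - G b = ∫_b^1 g  for b ∈ [0,1]
  have oneG : ∀ b ∈ Icc (0:ℝ) 1, 1 - G b = ∫ v in b..1, g v := by
    intro b hb
    have hsplit : (∫ s in (0:ℝ)..b, g s) + ∫ s in b..1, g s = ∫ s in (0:ℝ)..1, g s :=
      intervalIntegral.integral_add_adjacent_intervals (hgint 0 b hmem0 hb) (hgint b 1 hb hmem1)
    rw [hG b]
    linarith [hg_mass, hsplit]
  -- γ 0 = 0
  have hF0 : F 0 = 0 := by rw [hF]; simp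
  have hγ0 : γ 0 = 0 := by rw [hγ 0 hmem0, hF0]; simp
  intro c hc
  obtain ⟨hc0, hccbar⟩ := hc
  have hcI : c ∈ Ico (0:ℝ) cbar := ⟨hc0, hccbar⟩
  have hc1 : c ≤ 1 := le_trans hccbar.le hcbar.2
  have hcmem : c ∈ Icc (0:ℝ) 1 := ⟨hc0, hc1⟩
  have ha0 : 0 ≤ γ c := by
    rw [← hγ0]
    exact hγ_mono.monotoneOn hmem0 hcmem hc0
  have ha1 : γ c < 1 := by
    rw [← hγcbar]
    exact hγ_mono hcmem hcbar hccbar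
  have ha_mem : γ c ∈ Icc (0:ℝ) 1 := ⟨ha0, ha1.le⟩
  -- q c = ∫_{γ c}^1 g > 0
  have hq_eq : q c = ∫ v in (γ c)..1, g v := by
    rw [hq c hcI, oneG _ ha_mem]
  have hqpos : 0 < q c := by
    rw [hq_eq]
    apply intervalIntegral.intervalIntegral_pos_of_pos_on (hgint _ _ ha_mem hmem1)
    · intro x hx
      exact hg_pos x ⟨le_trans ha0 hx.1.le, hx.2.le⟩
    · exact ha1
  refine ⟨hqpos, ?_⟩
  intro hhyp
  set GA := G (γ c) with hGA
  have hGA_eq : GA = ∫ s in (0:ℝ)..(γ c), g s := hG (γ c)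
  have hGA_nonneg : 0 ≤ GA := by
    rw [hGA_eq]
    apply intervalIntegral.integral_nonneg ha0
    intro x hx
    exact (hg_pos x ⟨hx.1, le_trans hx.2 ha1.le⟩).le
  -- rewrite the hypothesis
  have hsub : (∫ v in (0:ℝ)..(γ c), (v - c) * g v)
      = (∫ v in (0:ℝ)..(γ c), v * g v) - c * ∫ v in (0:ℝ)..(γ c), g v := by
    have heq : ∀ v : ℝ, (v - c) * g v = v * g v - c * g v := fun v => by ring
    simp_rw [heq]
    rw [intervalIntegral.integral_sub (hvgint 0 (γ c) hmem0 ha_mem)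
      ((hgint 0 (γ c) hmem0 ha_mem).const_mul c), intervalIntegral.integral_const_mul]
  have h1 : (∫ v in (0:ℝ)..(γ c), v * g v) ≤ c * GA := by
    rw [hGA_eq]
    linarith [hsub ▸ hhyp]
  -- c * q c ≤ tstar c
  have h2 : c * q c ≤ tstar c := by
    rw [htstar c hcI]
    have : 0 ≤ ∫ x in c..cbar, (1 - G (γ x)) := by
      apply intervalIntegral.integral_nonneg hccbar.le
      intro x hx
      have hx01 : x ∈ Icc (0:ℝ) 1 := ⟨le_trans hc0 hx.1, le_trans hx.2 hcbar.2⟩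
      have hγx1 : γ x ≤ 1 := by
        rw [← hγcbar]
        exact hγ_mono.monotoneOn hx01 hcbar hx.2
      have hγx0 : 0 ≤ γ x := by
        rw [← hγ0]
        exact hγ_mono.monotoneOn hmem0 hx01 hx01.1
      rw [oneG (γ x) ⟨hγx0, hγx1⟩]
      apply intervalIntegral.integral_nonneg hγx1
      intro v hv
      exact (hg_pos v ⟨le_trans hγx0 hv.1, hv.2⟩).le
    linarith
  -- μ split
  have hμsplit : μ = (∫ v in (0:ℝ)..(γ c), v * g v) + ∫ v in (γ c)..1, v * g v := by
    rw [hμ]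
    exact (intervalIntegral.integral_add_adjacent_intervals
      (hvgint 0 (γ c) hmem0 ha_mem) (hvgint (γ c) 1 ha_mem hmem1)).symm
  -- key chain
  have hkey : (∫ v in (0:ℝ)..(γ c), v * g v) ≤ tstar c * GA / q c := by
    rw [le_div_iff₀ hqpos]
    calc (∫ v in (0:ℝ)..(γ c), v * g v) * q c
        ≤ (c * GA) * q c := mul_le_mul_of_nonneg_right h1 hqpos.le
      _ = (c * q c) * GA := by ring
      _ ≤ tstar c * GA := mul_le_mul_of_nonneg_right h2 hGA_nonneg
  have hGAq : GA = 1 - q c := by rw [hq c hcI]; ring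
  have hfinal : tstar c * GA / q c = tstar c / q c - tstar c := by
    rw [hGAq]
    field_simp
  rw [hμsplit, hpstar c hcI]
  linarith [hfinal ▸ hkey]
end
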